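/- arXiv:2506.07252 — 7 statements merged into one kernel-verified Lean document; each statement's English description precedes it below -/
import Mathlib

section
/- Let θ ∈ (0, π), a, b > 0, and f(φ) = a·sec(φ) + b·sec(θ − φ) on the interval (θ − π/2, π/2). Then f tends to +∞ at both endpoints of the interval and has a unique critical point φ₀ in the interval, which is the unique global minimizer of f. -/
open Real Filter

namespace S3aux

noncomputable def h (x : ℝ) : ℝ := Real.sin x / Real.cos x ^ 2

lemma h_strictMonoOn : StrictMonoOn h (Set.Ioo (-(π/2)) (π/2)) := by
  apply strictMonoOn_of_deriv_pos (convex_Ioo _ _)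
  · apply ContinuousOn.div Real.continuous_sin.continuousOn
      (Real.continuous_cos.continuousOn.pow 2)
    intro x hx
    have hc := Real.cos_pos_of_mem_Ioo hx
    exact pow_ne_zero 2 hc.ne'
  · intro x hx
    rw [interior_Ioo] at hx
    have hc := Real.cos_pos_of_mem_Ioo hx
    have hd := (Real.hasDerivAt_sin x).div ((Real.hasDerivAt_cos x).pow 2)
      (by positivity : Real.cos x ^ 2 ≠ 0)
    unfold h
    rw [show (fun x => Real.sin x / Real.cos x ^ 2) = Real.sin / Real.cos ^ 2 from rfl, hd.deriv]
    simp only [Pi.pow_apply]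
    apply div_pos
    · have hs := Real.sin_sq_add_cos_sq x
      push_cast
      norm_num
      nlinarith [mul_pos hc (mul_pos hc hc), mul_nonneg (sq_nonneg (Real.sin x)) hc.le]
    · positivity

end S3aux

/-- `f(φ) = a sec φ + b sec (θ - φ)` tends to `+∞` at both endpoints of
`(θ - π/2, π/2)` and has a unique critical point `φ₀` there, which is the unique
global minimizer of `f` on the interval. -/
theorem statement3 (θ a b : ℝ) (hθ0 : 0 < θ) (hθπ : θ < π)
    (ha : 0 < a) (hb : 0 < b) :
    Tendsto (fun φ : ℝ => a / Real.cos φ + b / Real.cos (θ - φ))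
      (nhdsWithin (θ - π / 2) (Set.Ioo (θ - π / 2) (π / 2))) atTop ∧
    Tendsto (fun φ : ℝ => a / Real.cos φ + b / Real.cos (θ - φ))
      (nhdsWithin (π / 2) (Set.Ioo (θ - π / 2) (π / 2))) atTop ∧
    ∃ φ₀ ∈ Set.Ioo (θ - π / 2) (π / 2),
      (∀ φ ∈ Set.Ioo (θ - π / 2) (π / 2),
        deriv (fun ψ : ℝ => a / Real.cos ψ + b / Real.cos (θ - ψ)) φ = 0 ↔ φ = φ₀) ∧
      (∀ φ ∈ Set.Ioo (θ - π / 2) (π / 2), φ ≠ φ₀ →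
        a / Real.cos φ₀ + b / Real.cos (θ - φ₀) < a / Real.cos φ + b / Real.cos (θ - φ)) := by
  have hπ := Real.pi_pos
  set I := Set.Ioo (θ - π / 2) (π / 2) with hI
  set f : ℝ → ℝ := fun φ => a / Real.cos φ + b / Real.cos (θ - φ) with hf
  set g : ℝ → ℝ := fun φ =>
    a * Real.sin φ / Real.cos φ ^ 2 - b * Real.sin (θ - φ) / Real.cos (θ - φ) ^ 2 with hg
  have hII : θ - π / 2 < π / 2 := by linarith
  have hcos1 : ∀ φ ∈ I, 0 < Real.cos φ := fun φ hφ =>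
    Real.cos_pos_of_mem_Ioo ⟨by have := hφ.1; linarith, hφ.2⟩
  have hcos2 : ∀ φ ∈ I, 0 < Real.cos (θ - φ) := fun φ hφ =>
    Real.cos_pos_of_mem_Ioo ⟨by have := hφ.2; linarith, by have := hφ.1; linarith⟩
  have hsθ : 0 < Real.sin θ := Real.sin_pos_of_pos_of_lt_pi hθ0 hθπ
  have hcθ : Real.cos (θ - π / 2) = Real.sin θ := by
    rw [show θ - π / 2 = -(π / 2 - θ) by ring, Real.cos_neg, Real.cos_pi_div_two_sub]
  -- derivative
  have hderiv : ∀ φ ∈ I, HasDerivAt f (g φ) φ := by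
    intro φ hφ
    have hc1 := (hcos1 φ hφ).ne'
    have hc2 := (hcos2 φ hφ).ne'
    have h1 : HasDerivAt (fun ψ : ℝ => a / Real.cos ψ)
        ((0 * Real.cos φ - a * (-Real.sin φ)) / Real.cos φ ^ 2) φ :=
      (hasDerivAt_const φ a).div (Real.hasDerivAt_cos φ) hc1
    have hinner : HasDerivAt (fun ψ : ℝ => Real.cos (θ - ψ)) (Real.sin (θ - φ)) φ := by
      have := (Real.hasDerivAt_cos (θ - φ)).comp φ ((hasDerivAt_id φ).const_sub θ)
      rw [show Real.sin (θ - φ) = -Real.sin (θ - φ) * -1 by ring]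
      exact this
    have h2 : HasDerivAt (fun ψ : ℝ => b / Real.cos (θ - ψ))
        ((0 * Real.cos (θ - φ) - b * Real.sin (θ - φ)) / Real.cos (θ - φ) ^ 2) φ :=
      (hasDerivAt_const φ b).div hinner hc2
    have hsum := h1.add h2
    have heq : g φ = (0 * Real.cos φ - a * (-Real.sin φ)) / Real.cos φ ^ 2 +
        (0 * Real.cos (θ - φ) - b * Real.sin (θ - φ)) / Real.cos (θ - φ) ^ 2 := by
      simp only [hg]
      field_simp
      ring
    rw [← heq] at hsum
    exact hsum
  -- g is strictly monotone
  have hgh : ∀ φ, g φ = a * S3aux.h φ + b * S3aux.h (φ - θ) := by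
    intro φ
    unfold S3aux.h
    rw [show φ - θ = -(θ - φ) by ring, Real.sin_neg, Real.cos_neg]
    simp only [hg]
    ring
  have hmem : ∀ φ ∈ I, φ ∈ Set.Ioo (-(π/2)) (π/2) ∧ φ - θ ∈ Set.Ioo (-(π/2)) (π/2) := by
    intro φ hφ
    obtain ⟨h1, h2⟩ := hφ
    exact ⟨⟨by linarith, by linarith⟩, ⟨by linarith, by linarith⟩⟩
  have hmg : StrictMonoOn g I := by
    intro x hx y hy hxy
    have h1 := S3aux.h_strictMonoOn (hmem x hx).1 (hmem y hy).1 hxy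
    have h2 := S3aux.h_strictMonoOn (hmem x hx).2 (hmem y hy).2 (by linarith)
    rw [hgh x, hgh y]
    have := mul_lt_mul_of_pos_left h1 ha
    have := mul_lt_mul_of_pos_left h2 hb
    linarith
  -- continuity of f and g on I
  have hfc : ContinuousOn f I := by
    apply ContinuousOn.add
    · exact ContinuousOn.div continuousOn_const Real.continuous_cos.continuousOn
        (fun φ hφ => (hcos1 φ hφ).ne')
    · exact ContinuousOn.div continuousOn_const
        ((Real.continuous_cos.comp (continuous_const.sub continuous_id)).continuousOn)
        (fun φ hφ => (hcos2 φ hφ).ne')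
  have hgc : ContinuousOn g I := by
    apply ContinuousOn.sub
    · exact ContinuousOn.div (continuousOn_const.mul Real.continuous_sin.continuousOn)
        (Real.continuous_cos.continuousOn.pow 2) (fun φ hφ => by
          have := hcos1 φ hφ; positivity)
    · exact ContinuousOn.div
        (continuousOn_const.mul
          ((Real.continuous_sin.comp (continuous_const.sub continuous_id)).continuousOn))
        (((Real.continuous_cos.comp (continuous_const.sub continuous_id)).continuousOn).pow 2)
        (fun φ hφ => by have := hcos2 φ hφ; positivity)
  -- tendsto of cos at endpoints
  have hcL : Tendsto (fun φ : ℝ => Real.cos (θ - φ)) (nhdsWithin (θ - π / 2) I)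
      (nhdsWithin 0 (Set.Ioi 0)) := by
    rw [tendsto_nhdsWithin_iff]
    constructor
    · have hcont : Tendsto (fun φ : ℝ => Real.cos (θ - φ)) (nhds (θ - π / 2))
          (nhds (Real.cos (θ - (θ - π / 2)))) :=
        (Real.continuous_cos.comp (continuous_const.sub continuous_id)).tendsto _
      rw [show θ - (θ - π / 2) = π / 2 by ring, Real.cos_pi_div_two] at hcont
      exact hcont.mono_left nhdsWithin_le_nhds
    · filter_upwards [self_mem_nhdsWithin] with φ hφ
      exact hcos2 φ hφ
  have hcR : Tendsto (fun φ : ℝ => Real.cos φ) (nhdsWithin (π / 2) I)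
      (nhdsWithin 0 (Set.Ioi 0)) := by
    rw [tendsto_nhdsWithin_iff]
    constructor
    · have hcont : Tendsto Real.cos (nhds (π / 2)) (nhds (Real.cos (π / 2))) :=
        Real.continuous_cos.tendsto _
      rw [Real.cos_pi_div_two] at hcont
      exact hcont.mono_left nhdsWithin_le_nhds
    · filter_upwards [self_mem_nhdsWithin] with φ hφ
      exact hcos1 φ hφ
  -- first tendsto
  have ht1 : Tendsto f (nhdsWithin (θ - π / 2) I) atTop := by
    have hA : Tendsto (fun φ : ℝ => a / Real.cos φ) (nhdsWithin (θ - π / 2) I)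
        (nhds (a / Real.cos (θ - π / 2))) := by
      apply Tendsto.mono_left _ nhdsWithin_le_nhds
      apply Filter.Tendsto.div tendsto_const_nhds (Real.continuous_cos.tendsto _)
      rw [hcθ]; exact hsθ.ne'
    have hB : Tendsto (fun φ : ℝ => b / Real.cos (θ - φ)) (nhdsWithin (θ - π / 2) I) atTop := by
      have := (tendsto_inv_nhdsGT_zero.comp hcL).const_mul_atTop hb
      simpa [div_eq_mul_inv, Function.comp] using this
    exact hA.add_atTop hB
  -- second tendsto
  have ht2 : Tendsto f (nhdsWithin (π / 2) I) atTop := by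
    have hB : Tendsto (fun φ : ℝ => b / Real.cos (θ - φ)) (nhdsWithin (π / 2) I)
        (nhds (b / Real.cos (θ - π / 2))) := by
      apply Tendsto.mono_left _ nhdsWithin_le_nhds
      have hcc : Continuous fun φ : ℝ => Real.cos (θ - φ) := by fun_prop
      have hcv : Tendsto (fun φ : ℝ => Real.cos (θ - φ)) (nhds (π / 2))
          (nhds (Real.cos (θ - π / 2))) := hcc.tendsto _
      apply Filter.Tendsto.div tendsto_const_nhds hcv
      rw [hcθ]; exact hsθ.ne'
    have hA : Tendsto (fun φ : ℝ => a / Real.cos φ) (nhdsWithin (π / 2) I) atTop := by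
      have := (tendsto_inv_nhdsGT_zero.comp hcR).const_mul_atTop ha
      simpa [div_eq_mul_inv, Function.comp] using this
    have := hB.add_atTop hA
    simpa [add_comm] using this
  -- g tends to -infty at left endpoint
  have hne1 : (nhdsWithin (θ - π / 2) I).NeBot := by
    rw [hI, nhdsWithin_Ioo_eq_nhdsGT hII]
    infer_instance
  have hne2 : (nhdsWithin (π / 2) I).NeBot := by
    rw [hI, nhdsWithin_Ioo_eq_nhdsLT hII]
    infer_instance
  have hgL : Tendsto g (nhdsWithin (θ - π / 2) I) atBot := by
    have hsq : Tendsto (fun φ : ℝ => (Real.cos (θ - φ) ^ 2)⁻¹) (nhdsWithin (θ - π / 2) I)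
        atTop := by
      apply tendsto_inv_nhdsGT_zero.comp
      rw [tendsto_nhdsWithin_iff]
      constructor
      · have := (hcL.mono_right nhdsWithin_le_nhds).pow 2
        simpa using this
      · filter_upwards [self_mem_nhdsWithin] with φ hφ
        have := hcos2 φ hφ
        exact Set.mem_Ioi.mpr (pow_pos this 2)
    have hmul : Tendsto (fun φ : ℝ => (-(b * Real.sin (θ - φ))) * (Real.cos (θ - φ) ^ 2)⁻¹)
        (nhdsWithin (θ - π / 2) I) atBot := by
      apply Tendsto.neg_mul_atTop (C := -b) (by linarith) _ hsq
      apply Tendsto.mono_left _ nhdsWithin_le_nhds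
      have hcc : Continuous fun φ : ℝ => -(b * Real.sin (θ - φ)) := by fun_prop
      have hcont := hcc.tendsto (θ - π / 2)
      simpa [show θ - (θ - π / 2) = π / 2 by ring] using hcont
    have hA : Tendsto (fun φ : ℝ => a * Real.sin φ / Real.cos φ ^ 2)
        (nhdsWithin (θ - π / 2) I)
        (nhds (a * Real.sin (θ - π / 2) / Real.cos (θ - π / 2) ^ 2)) := by
      apply Tendsto.mono_left _ nhdsWithin_le_nhds
      apply Filter.Tendsto.div ((continuous_const.mul Real.continuous_sin).tendsto _)
        ((Real.continuous_cos.pow 2).tendsto _)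
      rw [Pi.pow_apply, hcθ]; positivity
    have := hA.add_atBot hmul
    apply this.congr
    intro φ
    simp only [hg]
    ring
  -- g tends to +infty at right endpoint
  have hgR : Tendsto g (nhdsWithin (π / 2) I) atTop := by
    have hsq : Tendsto (fun φ : ℝ => (Real.cos φ ^ 2)⁻¹) (nhdsWithin (π / 2) I) atTop := by
      apply tendsto_inv_nhdsGT_zero.comp
      rw [tendsto_nhdsWithin_iff]
      constructor
      · have := (hcR.mono_right nhdsWithin_le_nhds).pow 2
        simpa using this
      · filter_upwards [self_mem_nhdsWithin] with φ hφ
        have := hcos1 φ hφ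
        exact Set.mem_Ioi.mpr (pow_pos this 2)
    have hmul : Tendsto (fun φ : ℝ => (a * Real.sin φ) * (Real.cos φ ^ 2)⁻¹)
        (nhdsWithin (π / 2) I) atTop := by
      apply Filter.Tendsto.pos_mul_atTop (C := a) ha _ hsq
      apply Tendsto.mono_left _ nhdsWithin_le_nhds
      have hcc : Continuous fun φ : ℝ => a * Real.sin φ := by fun_prop
      have hcont := hcc.tendsto (π / 2)
      simpa using hcont
    have hB : Tendsto (fun φ : ℝ => -(b * Real.sin (θ - φ) / Real.cos (θ - φ) ^ 2))
        (nhdsWithin (π / 2) I)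
        (nhds (-(b * Real.sin (θ - π / 2) / Real.cos (θ - π / 2) ^ 2))) := by
      apply Tendsto.mono_left _ nhdsWithin_le_nhds
      have hnum : Continuous fun φ : ℝ => b * Real.sin (θ - φ) := by fun_prop
      have hden : Continuous fun φ : ℝ => Real.cos (θ - φ) ^ 2 := by fun_prop
      apply Filter.Tendsto.neg
      apply Filter.Tendsto.div (hnum.tendsto _) (hden.tendsto _)
      rw [hcθ]; positivity
    have := hB.add_atTop hmul
    apply this.congr
    intro φ
    simp only [hg]
    ring
  -- find points with negative / positive g
  obtain ⟨φ₁, hφ₁I, hφ₁⟩ : ∃ φ₁ ∈ I, g φ₁ < 0 := by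
    have h1 : ∀ᶠ φ in nhdsWithin (θ - π / 2) I, g φ < 0 := hgL.eventually (eventually_lt_atBot 0)
    have h2 : ∀ᶠ φ in nhdsWithin (θ - π / 2) I, φ ∈ I := self_mem_nhdsWithin
    obtain ⟨φ₁, h, h'⟩ := (h2.and h1).exists
    exact ⟨φ₁, h, h'⟩
  obtain ⟨φ₂, hφ₂I, hφ₂⟩ : ∃ φ₂ ∈ I, 0 < g φ₂ := by
    have h1 : ∀ᶠ φ in nhdsWithin (π / 2) I, 0 < g φ := hgR.eventually (eventually_gt_atTop 0)
    have h2 : ∀ᶠ φ in nhdsWithin (π / 2) I, φ ∈ I := self_mem_nhdsWithin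
    obtain ⟨φ₂, h, h'⟩ := (h2.and h1).exists
    exact ⟨φ₂, h, h'⟩
  have h12 : φ₁ < φ₂ := by
    rcases lt_trichotomy φ₁ φ₂ with h | h | h
    · exact h
    · exfalso; rw [h] at hφ₁; linarith
    · exfalso; have := hmg hφ₂I hφ₁I h; linarith
  have hsub : Set.Icc φ₁ φ₂ ⊆ I := by
    intro x hx
    exact ⟨lt_of_lt_of_le hφ₁I.1 hx.1, lt_of_le_of_lt hx.2 hφ₂I.2⟩
  -- IVT
  obtain ⟨φ₀, hφ₀Icc, hφ₀⟩ : ∃ φ₀ ∈ Set.Icc φ₁ φ₂, g φ₀ = 0 := by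
    have := intermediate_value_Icc h12.le (hgc.mono hsub)
    have h0 : (0:ℝ) ∈ Set.Icc (g φ₁) (g φ₂) := ⟨hφ₁.le, hφ₂.le⟩
    obtain ⟨c, hc, hc'⟩ := this h0
    exact ⟨c, hc, hc'⟩
  have hφ₀I : φ₀ ∈ I := hsub hφ₀Icc
  refine ⟨ht1, ht2, φ₀, hφ₀I, ?_, ?_⟩
  · intro φ hφ
    rw [(hderiv φ hφ).deriv]
    constructor
    · intro h0
      exact hmg.injOn hφ hφ₀I (by rw [h0, hφ₀])
    · intro h0
      rw [h0, hφ₀]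
  · intro φ hφ hne
    have key : f φ₀ < f φ := by
      rcases hne.lt_or_gt with hlt | hlt
      · -- φ < φ₀
        have hsub' : Set.Icc φ φ₀ ⊆ I := fun x hx =>
          ⟨lt_of_lt_of_le hφ.1 hx.1, lt_of_le_of_lt hx.2 hφ₀I.2⟩
        obtain ⟨c, hc, hc'⟩ := exists_hasDerivAt_eq_slope f g hlt (hfc.mono hsub')
          (fun x hx => hderiv x (hsub' (Set.mem_Icc_of_Ioo hx)))
        have hcI : c ∈ I := hsub' (Set.mem_Icc_of_Ioo hc)
        have hneg : g c < 0 := by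
          have := hmg hcI hφ₀I hc.2
          rw [hφ₀] at this; linarith
        rw [hc'] at hneg
        have hd : 0 < φ₀ - φ := by linarith
        have := mul_neg_of_neg_of_pos hneg hd
        rw [div_mul_cancel₀ _ (by linarith : φ₀ - φ ≠ 0)] at this
        linarith
      · -- φ₀ < φ
        have hsub' : Set.Icc φ₀ φ ⊆ I := fun x hx =>
          ⟨lt_of_lt_of_le hφ₀I.1 hx.1, lt_of_le_of_lt hx.2 hφ.2⟩
        obtain ⟨c, hc, hc'⟩ := exists_hasDerivAt_eq_slope f g hlt (hfc.mono hsub')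
          (fun x hx => hderiv x (hsub' (Set.mem_Icc_of_Ioo hx)))
        have hcI : c ∈ I := hsub' (Set.mem_Icc_of_Ioo hc)
        have hpos : 0 < g c := by
          have := hmg hφ₀I hcI hc.1
          rw [hφ₀] at this; linarith
        rw [hc'] at hpos
        have hd : 0 < φ - φ₀ := by linarith
        have := mul_pos hpos hd
        rw [div_mul_cancel₀ _ (by linarith : φ - φ₀ ≠ 0)] at this
        linarith
    exact key
end

section
/- Let f(φ) = a·sec φ + b·sec(θ − φ) with a, b > 0 and 0 < θ < π/2, defined on (θ − π/2, π/2). Then the unique minimizer φ₀ of f satisfies 0 < φ₀ < θ. -/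
open Real

/-- For `0 < θ < π/2`, the unique minimizer `φ₀` of
`f(φ) = a sec φ + b sec (θ - φ)` on `(θ - π/2, π/2)` satisfies `0 < φ₀ < θ`. -/
theorem statement4 (θ a b φ₀ : ℝ) (hθ0 : 0 < θ) (hθ : θ < π / 2)
    (ha : 0 < a) (hb : 0 < b)
    (hφ₀ : φ₀ ∈ Set.Ioo (θ - π / 2) (π / 2))
    (hmin : ∀ φ ∈ Set.Ioo (θ - π / 2) (π / 2),
      a / Real.cos φ₀ + b / Real.cos (θ - φ₀) ≤ a / Real.cos φ + b / Real.cos (θ - φ)) :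
    0 < φ₀ ∧ φ₀ < θ := by
  obtain ⟨h1, h2⟩ := hφ₀
  have hpi : (0:ℝ) < π / 2 := by positivity
  have hc0 : 0 < Real.cos φ₀ := by
    apply Real.cos_pos_of_mem_Ioo
    constructor <;> [linarith; linarith]
  have hc1 : 0 < Real.cos (θ - φ₀) := by
    apply Real.cos_pos_of_mem_Ioo
    constructor <;> [linarith; linarith]
  set f : ℝ → ℝ := fun φ => a / Real.cos φ + b / Real.cos (θ - φ) with hf
  have hd1 : HasDerivAt (fun φ => a / Real.cos φ)
      (a * Real.sin φ₀ / (Real.cos φ₀)^2) φ₀ := by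
    have h := (hasDerivAt_const φ₀ a).div (Real.hasDerivAt_cos φ₀) (ne_of_gt hc0)
    refine h.congr_deriv ?_
    ring
  have hd2 : HasDerivAt (fun φ => b / Real.cos (θ - φ))
      (-(b * Real.sin (θ - φ₀) / (Real.cos (θ - φ₀))^2)) φ₀ := by
    have hinner : HasDerivAt (fun φ : ℝ => θ - φ) (-1) φ₀ := by
      exact (hasDerivAt_id' φ₀).const_sub θ
    have hcos : HasDerivAt (fun φ => Real.cos (θ - φ)) (Real.sin (θ - φ₀)) φ₀ := by
      have := (Real.hasDerivAt_cos (θ - φ₀)).comp φ₀ hinner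
      simp only [mul_neg, mul_one, neg_neg] at this
      exact this
    have h := (hasDerivAt_const φ₀ b).div hcos (ne_of_gt hc1)
    refine h.congr_deriv ?_
    ring
  have hderiv : HasDerivAt f
      (a * Real.sin φ₀ / (Real.cos φ₀)^2 - b * Real.sin (θ - φ₀) / (Real.cos (θ - φ₀))^2) φ₀ := by
    have := hd1.add hd2
    refine this.congr_deriv ?_
    ring
  have hlm : IsLocalMin f φ₀ := by
    have hmem : Set.Ioo (θ - π / 2) (π / 2) ∈ nhds φ₀ :=
      isOpen_Ioo.mem_nhds ⟨h1, h2⟩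
    exact Filter.eventually_of_mem hmem (fun φ hφ => hmin φ hφ)
  have hzero := hlm.hasDerivAt_eq_zero hderiv
  have hc0' : (0:ℝ) < (Real.cos φ₀)^2 := by positivity
  have hc1' : (0:ℝ) < (Real.cos (θ - φ₀))^2 := by positivity
  constructor
  · by_contra h
    push_neg at h
    have hs0 : Real.sin φ₀ ≤ 0 := by
      apply Real.sin_nonpos_of_nonpos_of_neg_pi_le h
      nlinarith [Real.pi_gt_three]
    have hs1 : 0 < Real.sin (θ - φ₀) := by
      apply Real.sin_pos_of_pos_of_lt_pi
      · linarith
      · nlinarith [Real.pi_gt_three]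
    have t1 : a * Real.sin φ₀ / (Real.cos φ₀)^2 ≤ 0 := by
      apply div_nonpos_of_nonpos_of_nonneg
      · nlinarith
      · positivity
    have t2 : 0 < b * Real.sin (θ - φ₀) / (Real.cos (θ - φ₀))^2 := by positivity
    linarith
  · by_contra h
    push_neg at h
    have hs0 : 0 < Real.sin φ₀ := by
      apply Real.sin_pos_of_pos_of_lt_pi
      · linarith
      · nlinarith [Real.pi_gt_three]
    have hs1 : Real.sin (θ - φ₀) ≤ 0 := by
      apply Real.sin_nonpos_of_nonpos_of_neg_pi_le (by linarith)
      nlinarith [Real.pi_gt_three]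
    have t1 : 0 < a * Real.sin φ₀ / (Real.cos φ₀)^2 := by positivity
    have t2 : b * Real.sin (θ - φ₀) / (Real.cos (θ - φ₀))^2 ≤ 0 := by
      apply div_nonpos_of_nonpos_of_nonneg
      · nlinarith
      · positivity
    linarith
end

section
/- (CPP, geometric form in the plane) Let l₁, l₂ be two nonparallel lines meeting at E, let A ∈ l₁, B ∈ l₂, and let O be an interior point of segment [AB]. Suppose the perpendicular to l₁ at A, the perpendicular to l₂ at B, and the perpendicular to line AB at O all pass through a common point C. Then, writing E' for the foot of the perpendicular from E to line AB, one has |BE'| = |AO|. -/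
/-!
Since `∠CAE` and `∠CBE` are right angles, `A` and `B` lie on the circle with diameter `CE`, so the
perpendicular bisector of `AB` passes through the midpoint of `CE`. Projecting orthogonally onto
line `AB`, which sends `C` to `O` and `E` to `E'`, the midpoint of `CE` goes to the midpoint of
`AB`; hence `O + E' = A + B`, i.e. `B - E' = O - A`.
-/

open RealInnerProductSpace

section
variable {V : Type*} [NormedAddCommGroup V] [InnerProductSpace ℝ V]

theorem inner_add_sub_add_sub_eq_zero_of_inner_eq_zero {A B C E : V}
    (hA : ⟪C - A, A - E⟫ = 0) (hB : ⟪C - B, B - E⟫ = 0) :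
    ⟪C + E - (A + B), B - A⟫ = 0 := by
  have hdiff : ⟪C + E - (A + B), B - A⟫ = ⟪C - B, B - E⟫ - ⟪C - A, A - E⟫ := by
    simp only [inner_sub_left, inner_sub_right, inner_add_left, real_inner_comm]
    ring
  rw [hdiff, hA, hB, sub_zero]

theorem add_eq_add_of_inner_eq_zero {A B P Q : V}
    (hP : ∃ s : ℝ, P = A + s • (B - A)) (hQ : ∃ t : ℝ, Q = A + t • (B - A))
    (h : ⟪P + Q - (A + B), B - A⟫ = 0) : P + Q = A + B := by
  obtain ⟨s, rfl⟩ := hP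
  obtain ⟨t, rfl⟩ := hQ
  have hc : A + s • (B - A) + (A + t • (B - A)) - (A + B) = (s + t - 1) • (B - A) := by module
  rw [hc] at h
  rw [← sub_eq_zero, hc, ← inner_self_eq_zero (𝕜 := ℝ), real_inner_smul_left, real_inner_comm, h,
    mul_zero]

end

theorem statement6_general (E A B O C E' : EuclideanSpace ℝ (Fin 2))
    (hO : O ∈ openSegment ℝ A B)
    (hperp1 : ⟪C - A, A - E⟫ = 0)
    (hperp2 : ⟪C - B, B - E⟫ = 0)
    (hperpO : ⟪C - O, B - A⟫ = 0)
    (hE'mem : ∃ t : ℝ, E' = A + t • (B - A))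
    (hE'perp : ⟪E - E', B - A⟫ = 0) :
    dist B E' = dist A O := by
  have hOmem : ∃ s : ℝ, O = A + s • (B - A) := by
    rw [openSegment_eq_image'] at hO
    obtain ⟨s, -, rfl⟩ := hO
    exact ⟨s, rfl⟩
  have hmid : ⟪O + E' - (A + B), B - A⟫ = 0 := by
    have hsplit : O + E' - (A + B) = (C + E - (A + B)) - (C - O) - (E - E') := by abel
    rw [hsplit, inner_sub_left, inner_sub_left,
      inner_add_sub_add_sub_eq_zero_of_inner_eq_zero hperp1 hperp2, hperpO, hE'perp,
      sub_self, sub_self]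
  have hsum : O + E' = A + B := add_eq_add_of_inner_eq_zero hOmem hE'mem hmid
  rw [dist_eq_norm, dist_comm, dist_eq_norm, show B - E' = O - A by
    rw [sub_eq_sub_iff_add_eq_add, add_comm, hsum]]

/-- (CPP, geometric form in the plane.) Let `l₁ = EA`, `l₂ = EB` be nonparallel
lines meeting at `E`, let `O` lie strictly between `A` and `B`, and suppose the
perpendicular to `l₁` at `A`, the perpendicular to `l₂` at `B` and the
perpendicular to line `AB` at `O` pass through a common point `C`. If `E'` is
the foot of the perpendicular from `E` to line `AB`, then `|BE'| = |AO|`. -/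
theorem statement6 (E A B O C E' : EuclideanSpace ℝ (Fin 2))
    (hA : A ≠ E) (hB : B ≠ E)
    (hncol : ¬ Collinear ℝ ({E, A, B} : Set (EuclideanSpace ℝ (Fin 2))))
    (hO : O ∈ openSegment ℝ A B)
    (hperp1 : ⟪C - A, A - E⟫ = 0)
    (hperp2 : ⟪C - B, B - E⟫ = 0)
    (hperpO : ⟪C - O, B - A⟫ = 0)
    (hE'mem : ∃ t : ℝ, E' = A + t • (B - A))
    (hE'perp : ⟪E - E', B - A⟫ = 0) :
    dist B E' = dist A O :=
  statement6_general E A B O C E' hO hperp1 hperp2 hperpO hE'mem hE'perp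
end

section
/- (Linearization lemma) Let p be the x-axis in ℝ², let O = (0, 1), and let h : Δ → ℝ be a continuous function on an open interval Δ ∋ p₀ with h(p₀) = 0 and h'(p₀) = 0. For φ near φ₀ := arctan p₀, let ρ̃(φ) denote the distance from O to the point (t, h(t)) of the graph of h lying on the ray from O at angle φ (measured from the downward vertical OO'), and let ρ(φ) = sec φ be the distance from O to the x-axis point on the same ray. Then ρ̃ is differentiable at φ₀ and ρ̃'(φ₀) = ρ'(φ₀). -/
open Real Filter

/-- (Linearization lemma.) Let `p` be the x-axis, `O = (0,1)`, and `h` a continuous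
function on an open interval `Δ ∋ p₀` with `h p₀ = 0` and `h' p₀ = 0`, so that the
graph of `h` is tangent to `p` at `(p₀, 0)`. For `φ` near `φ₀ = arctan p₀`, let
`τ φ ∈ Δ` be the parameter of the point `(τ φ, h (τ φ))` of the graph lying on the
ray from `O` at angle `φ` (so `tan φ = τ φ / (1 - h (τ φ))`), and let
`ρ̃ φ = dist O (τ φ, h (τ φ))`. Then `ρ̃` is differentiable at `φ₀` and its
derivative there equals that of `ρ φ = 1 / cos φ` (the distance to the line). -/
theorem statement7 (Δ : Set ℝ) (hΔopen : IsOpen Δ) (hΔconn : Δ.OrdConnected)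
    (p₀ : ℝ) (hp₀ : p₀ ∈ Δ)
    (h : ℝ → ℝ) (hcont : ContinuousOn h Δ) (h0 : h p₀ = 0)
    (hderiv : HasDerivAt h 0 p₀)
    (τ : ℝ → ℝ) (hτ0 : τ (Real.arctan p₀) = p₀)
    (hτcont : ContinuousAt τ (Real.arctan p₀))
    (hτ : ∀ᶠ φ in nhds (Real.arctan p₀),
      τ φ ∈ Δ ∧ Real.tan φ = τ φ / (1 - h (τ φ)))
    (rhoT : ℝ → ℝ)
    (hrhoT : ∀ φ, rhoT φ = Real.sqrt ((τ φ) ^ 2 + (1 - h (τ φ)) ^ 2)) :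
    DifferentiableAt ℝ rhoT (Real.arctan p₀) ∧
      deriv rhoT (Real.arctan p₀) =
        deriv (fun φ : ℝ => 1 / Real.cos φ) (Real.arctan p₀) := by
  set φ₀ := Real.arctan p₀ with hφ₀
  have hcos : 0 < Real.cos φ₀ := Real.cos_arctan_pos p₀
  have hcosne : Real.cos φ₀ ≠ 0 := ne_of_gt hcos
  have htan0 : Real.tan φ₀ = p₀ := Real.tan_arctan p₀
  -- g = h ∘ τ is continuous at φ₀ with value 0
  set g : ℝ → ℝ := fun φ => h (τ φ) with hg
  have hg0 : g φ₀ = 0 := by simp [hg, hτ0, h0]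
  have hgcont : ContinuousAt g φ₀ := by
    have hh : ContinuousAt h (τ φ₀) := by
      rw [hτ0]; exact hcont.continuousAt (hΔopen.mem_nhds hp₀)
    exact hh.comp hτcont
  -- ε = slope h p₀, tendsto 0 at p₀
  set ε : ℝ → ℝ := slope h p₀ with hε
  have hεeq : ∀ x, h x = ε x * (x - p₀) := by
    intro x
    rcases eq_or_ne x p₀ with rfl | hx
    · simp [hε, h0, slope]
    · rw [hε, slope_def_field, h0, sub_zero, div_mul_cancel₀ _ (sub_ne_zero.mpr hx)]
  have hεtend : Tendsto ε (nhds p₀) (nhds 0) := by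
    have h1 : Tendsto ε (nhdsWithin p₀ {p₀}ᶜ) (nhds 0) :=
      hasDerivAt_iff_tendsto_slope.mp hderiv
    have h2 : Tendsto ε (pure p₀) (nhds 0) := by
      have : ε p₀ = 0 := by simp [hε, slope]
      simp [tendsto_pure_left, this]
      intro s hs; exact mem_of_mem_nhds (by simpa [this] using hs)
    rw [← nhdsNE_sup_pure p₀]
    exact h1.sup h2
  have hετ : Tendsto (fun φ => ε (τ φ)) (nhds φ₀) (nhds 0) := by
    have h1 : Tendsto τ (nhds φ₀) (nhds p₀) := by
      rw [← hτ0]; exact hτcont.tendsto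
    exact hεtend.comp h1
  -- u φ = 1 + tan φ * ε (τ φ), tendsto 1
  set u : ℝ → ℝ := fun φ => 1 + Real.tan φ * ε (τ φ) with hu
  have htancont : ContinuousAt Real.tan φ₀ := Real.continuousAt_tan.mpr hcosne
  have hutend : Tendsto u (nhds φ₀) (nhds 1) := by
    have := (htancont.tendsto.mul hετ)
    have h2 : Tendsto (fun φ => Real.tan φ * ε (τ φ)) (nhds φ₀) (nhds 0) := by
      simpa using this
    simpa using (tendsto_const_nhds (x := (1:ℝ)) |>.add h2)
  have hune : ∀ᶠ φ in nhds φ₀, u φ ≠ 0 := by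
    have : ∀ᶠ φ in nhds φ₀, u φ ∈ Set.Ioi (0:ℝ) :=
      hutend (Ioi_mem_nhds one_pos)
    exact this.mono fun φ hφ => ne_of_gt hφ
  -- eventually 1 - g > 0 and τ = tan * (1 - g)
  have hgpos : ∀ᶠ φ in nhds φ₀, 0 < 1 - g φ := by
    have : Tendsto (fun φ => 1 - g φ) (nhds φ₀) (nhds 1) := by
      simpa [hg0] using (tendsto_const_nhds (x := (1:ℝ))).sub hgcont.tendsto
    exact this (Ioi_mem_nhds one_pos)
  have hkey : ∀ᶠ φ in nhds φ₀,
      τ φ = Real.tan φ * (1 - g φ) ∧ (τ φ - p₀) * u φ = Real.tan φ - p₀ := by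
    filter_upwards [hτ, hgpos] with φ h1 h2
    have hne : (1 - g φ) ≠ 0 := ne_of_gt h2
    have hτeq : τ φ = Real.tan φ * (1 - g φ) := by
      rw [h1.2, show h (τ φ) = g φ from rfl]; field_simp
    refine ⟨hτeq, ?_⟩
    have hgε : g φ = ε (τ φ) * (τ φ - p₀) := hεeq (τ φ)
    show (τ φ - p₀) * (1 + Real.tan φ * ε (τ φ)) = Real.tan φ - p₀
    linear_combination hτeq - Real.tan φ * hgε
  -- τ is differentiable at φ₀
  have hτderiv : HasDerivAt τ (1 / Real.cos φ₀ ^ 2) φ₀ := by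
    rw [hasDerivAt_iff_tendsto_slope]
    have htanslope : Tendsto (slope Real.tan φ₀) (nhdsWithin φ₀ {φ₀}ᶜ)
        (nhds (1 / Real.cos φ₀ ^ 2)) :=
      hasDerivAt_iff_tendsto_slope.mp (Real.hasDerivAt_tan hcosne)
    have huinv : Tendsto (fun φ => (u φ)⁻¹) (nhdsWithin φ₀ {φ₀}ᶜ) (nhds 1) := by
      have h1 : Tendsto (fun φ => (u φ)⁻¹) (nhds φ₀) (nhds 1) := by
        simpa using hutend.inv₀ one_ne_zero
      exact h1.mono_left nhdsWithin_le_nhds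
    have hmul := htanslope.mul huinv
    rw [mul_one] at hmul
    refine hmul.congr' ?_
    have h1 : ∀ᶠ φ in nhdsWithin φ₀ {φ₀}ᶜ,
        (τ φ - p₀) * u φ = Real.tan φ - p₀ ∧ u φ ≠ 0 := by
      exact nhdsWithin_le_nhds ((hkey.and hune).mono fun φ hφ => ⟨hφ.1.2, hφ.2⟩)
    filter_upwards [h1, self_mem_nhdsWithin] with φ hφ hφne
    have hφne' : φ - φ₀ ≠ 0 := sub_ne_zero.mpr hφne
    have hτeq : τ φ - p₀ = (Real.tan φ - p₀) / u φ := by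
      rw [eq_div_iff hφ.2]; exact hφ.1
    simp only [slope, vsub_eq_sub, smul_eq_mul, hτ0, htan0, hτeq]
    ring
  -- g has derivative 0 at φ₀
  have hgderiv : HasDerivAt g 0 φ₀ := by
    have hh : HasDerivAt h 0 (τ φ₀) := by rw [hτ0]; exact hderiv
    have := hh.comp φ₀ hτderiv
    simp only [zero_mul] at this; exact this
  -- the model function f
  set D : ℝ := Real.sin φ₀ / Real.cos φ₀ ^ 2 with hD
  have hcosinv : HasDerivAt (fun φ : ℝ => 1 / Real.cos φ) D φ₀ := by
    have := (Real.hasDerivAt_cos φ₀).fun_inv hcosne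
    simpa [hD, one_div, neg_neg] using this
  have hfderiv : HasDerivAt (fun φ => (1 - g φ) * (1 / Real.cos φ)) D φ₀ := by
    have h1 : HasDerivAt (fun φ => 1 - g φ) 0 φ₀ := by
      simpa using (hasDerivAt_const φ₀ (1:ℝ)).fun_sub hgderiv
    have := h1.fun_mul hcosinv
    simpa [hg0] using this
  -- rhoT eventually equals the model function
  have heq : rhoT =ᶠ[nhds φ₀] fun φ => (1 - g φ) * (1 / Real.cos φ) := by
    have hcospos : ∀ᶠ φ in nhds φ₀, 0 < Real.cos φ := by
      have : ContinuousAt Real.cos φ₀ := Real.continuous_cos.continuousAt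
      exact this.tendsto (Ioi_mem_nhds hcos)
    filter_upwards [hkey, hgpos, hcospos] with φ h1 h2 h3
    have h3' : Real.cos φ ≠ 0 := ne_of_gt h3
    have htansq : Real.tan φ ^ 2 * Real.cos φ ^ 2 = 1 - Real.cos φ ^ 2 := by
      rw [Real.tan_eq_sin_div_cos, div_pow,
        div_mul_cancel₀ _ (by positivity : Real.cos φ ^ 2 ≠ 0)]
      exact Real.sin_sq φ
    have key : (τ φ) ^ 2 + (1 - h (τ φ)) ^ 2
        = ((1 - g φ) * (1 / Real.cos φ)) ^ 2 := by
      have hgdef : h (τ φ) = g φ := rfl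
      rw [hgdef, h1.1]
      field_simp
      linear_combination htansq
    rw [hrhoT, key]
    exact Real.sqrt_sq (by positivity)
  have hrhoTderiv : HasDerivAt rhoT D φ₀ := hfderiv.congr_of_eventuallyEq heq
  refine ⟨hrhoTderiv.differentiableAt, ?_⟩
  rw [hrhoTderiv.deriv, hcosinv.deriv]
end

section
/- Let C ⊂ ℝ² be a compact convex set with nonempty interior and O an interior point. For each direction φ, let [Ã(φ)B̃(φ)] = l(φ) ∩ C be the chord of C through O in direction φ, and f̃(φ) = |Ã(φ)B̃(φ)|. If φ* is a local minimizer of f̃, then C has a unique supporting line at Ã(φ*) and a unique supporting line at B̃(φ*). -/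
open Real RealInnerProductSpace

/-- Unit direction vector in the plane at angle `φ`. -/
noncomputable def lineDir (φ : ℝ) : EuclideanSpace ℝ (Fin 2) :=
  (WithLp.equiv 2 (Fin 2 → ℝ)).symm ![Real.cos φ, Real.sin φ]

/-- `v` is an (inward) normal vector of a supporting line of `C` at `P`:
`v ≠ 0` and `C` lies in the closed half-plane `{x | ⟪x - P, v⟫ ≤ 0}`. -/
def IsSupportVec (C : Set (EuclideanSpace ℝ (Fin 2)))
    (P v : EuclideanSpace ℝ (Fin 2)) : Prop :=
  v ≠ 0 ∧ ∀ x ∈ C, ⟪x - P, v⟫ ≤ 0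

local notation "E2" => EuclideanSpace ℝ (Fin 2)

lemma inner2 (x y : E2) : ⟪x, y⟫ = x 0 * y 0 + x 1 * y 1 := by
  simp [PiLp.inner_apply, Fin.sum_univ_two]; ring

lemma lineDir_apply0 (φ : ℝ) : lineDir φ 0 = Real.cos φ := rfl
lemma lineDir_apply1 (φ : ℝ) : lineDir φ 1 = Real.sin φ := rfl

lemma inner_lineDir (φ : ℝ) (v : E2) :
    ⟪lineDir φ, v⟫ = v 0 * Real.cos φ + v 1 * Real.sin φ := by
  rw [inner2, lineDir_apply0, lineDir_apply1]; ring

lemma norm_lineDir (φ : ℝ) : ‖lineDir φ‖ = 1 := by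
  rw [EuclideanSpace.norm_eq]
  simp only [lineDir_apply0, lineDir_apply1, Fin.sum_univ_two, Real.norm_eq_abs, sq_abs]
  rw [Real.cos_sq_add_sin_sq, Real.sqrt_one]

lemma inner_lineDir_self (φ : ℝ) : ⟪lineDir φ, lineDir φ⟫ = 1 := by
  rw [real_inner_self_eq_norm_sq, norm_lineDir]; norm_num

/-- continuity of the projection of `lineDir` on `v` -/
lemma continuous_p (v : E2) : Continuous (fun φ => ⟪lineDir φ, v⟫) := by
  have : (fun φ => ⟪lineDir φ, v⟫) = fun φ => v 0 * Real.cos φ + v 1 * Real.sin φ := by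
    funext φ; exact inner_lineDir φ v
  rw [this]
  exact ((continuous_const.mul Real.continuous_cos).add
    (continuous_const.mul Real.continuous_sin))

lemma hasDerivAt_p (v : E2) (φ : ℝ) :
    HasDerivAt (fun φ => ⟪lineDir φ, v⟫) (v 0 * (-Real.sin φ) + v 1 * Real.cos φ) φ := by
  have h : HasDerivAt (fun φ => v 0 * Real.cos φ + v 1 * Real.sin φ)
      (v 0 * (-Real.sin φ) + v 1 * Real.cos φ) φ :=
    ((Real.hasDerivAt_cos φ).const_mul (v 0)).add ((Real.hasDerivAt_sin φ).const_mul (v 1))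
  have he : (fun φ => ⟪lineDir φ, v⟫) = fun φ => v 0 * Real.cos φ + v 1 * Real.sin φ := by
    funext ψ; exact inner_lineDir ψ v
  rw [he]
  exact h

lemma lineDir_add_pi (φ : ℝ) : lineDir (φ + π) = -lineDir φ := by
  ext i
  fin_cases i <;>
    simp [lineDir_apply0, lineDir_apply1, Real.cos_add_pi, Real.sin_add_pi]

lemma lineSet_pi (O : E2) (φ : ℝ) :
    {x : E2 | ∃ t : ℝ, x = O + t • lineDir (φ + π)} =
      {x : E2 | ∃ t : ℝ, x = O + t • lineDir φ} := by
  ext x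
  constructor
  · rintro ⟨t, rfl⟩; exact ⟨-t, by simp [lineDir_add_pi]⟩
  · rintro ⟨t, rfl⟩; exact ⟨-t, by simp [lineDir_add_pi]⟩



/-- Interior points are strictly inside any supporting half-plane. -/
lemma inner_lt_of_interior {C : Set E2} {P v O : E2}
    (hsv : IsSupportVec C P v) (hO : O ∈ interior C) : ⟪O - P, v⟫ < 0 := by
  obtain ⟨hv, hsupp⟩ := hsv
  obtain ⟨ε, hε, hball⟩ := Metric.isOpen_iff.1 isOpen_interior O hO
  have hvn : 0 < ‖v‖ := norm_pos_iff.2 hv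
  set x : E2 := O + (ε / (2 * ‖v‖)) • v with hx
  have hxball : x ∈ Metric.ball O ε := by
    rw [Metric.mem_ball, dist_eq_norm]
    have h1 : x - O = (ε / (2 * ‖v‖)) • v := by rw [hx]; abel
    rw [h1, norm_smul, Real.norm_eq_abs, abs_of_pos (by positivity)]
    have h2 : ε / (2 * ‖v‖) * ‖v‖ = ε / 2 := by field_simp
    rw [h2]; linarith
  have hxC : x ∈ C := interior_subset (hball hxball)
  have hle := hsupp x hxC
  have hexp : ⟪x - P, v⟫ = ⟪O - P, v⟫ + (ε / (2 * ‖v‖)) * ⟪v, v⟫ := by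
    have h3 : x - P = (O - P) + (ε / (2 * ‖v‖)) • v := by rw [hx]; abel
    rw [h3, inner_add_left, real_inner_smul_left]
  have hvv : ⟪v, v⟫ = ‖v‖ ^ 2 := real_inner_self_eq_norm_sq v
  have hpos : 0 < (ε / (2 * ‖v‖)) * ⟪v, v⟫ := by rw [hvv]; positivity
  rw [hexp] at hle
  linarith

/-- Existence of a supporting vector at a non-interior point. -/
lemma exists_supportVec {C : Set E2} (hconv : Convex ℝ C) {O : E2}
    (hO : O ∈ interior C) {P : E2} (hP : P ∉ interior C) :
    ∃ v, IsSupportVec C P v := by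
  obtain ⟨f, hf⟩ := geometric_hahn_banach_open_point (hconv.interior) isOpen_interior hP
  set v : E2 := (InnerProductSpace.toDual ℝ E2).symm f with hv
  have hfv : ∀ y : E2, ⟪v, y⟫ = f y := fun y => by
    rw [hv]; exact InnerProductSpace.toDual_symm_apply
  have hlt : ∀ y ∈ interior C, ⟪y - P, v⟫ < 0 := by
    intro y hy
    have h := hf y hy
    rw [← hfv y, ← hfv P] at h
    rw [inner_sub_left, real_inner_comm v y, real_inner_comm v P]
    linarith
  refine ⟨v, ?_, ?_⟩
  · intro h0
    have := hlt O hO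
    rw [h0] at this
    simp at this
  · intro x hxC
    by_contra hpos
    push_neg at hpos
    set d : ℝ := ⟪x - P, v⟫ with hd
    set K : ℝ := ⟪O - x, v⟫ with hK
    set t : ℝ := min 1 (d / (2 * (|K| + 1))) with ht
    have ht0 : 0 < t := lt_min one_pos (by positivity)
    have ht1 : t ≤ 1 := min_le_left _ _
    have hmem : x + t • (O - x) ∈ interior C :=
      hconv.add_smul_sub_mem_interior hxC hO ⟨ht0, ht1⟩
    have hneg := hlt _ hmem
    have hexp : ⟪x + t • (O - x) - P, v⟫ = d + t * K := by
      have h3 : x + t • (O - x) - P = (x - P) + t • (O - x) := by abel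
      rw [h3, inner_add_left, real_inner_smul_left]
    rw [hexp] at hneg
    have htK : t * |K| ≤ d / 2 := by
      have h4 : t ≤ d / (2 * (|K| + 1)) := min_le_right _ _
      have h5 : |K| + 1 > 0 := by positivity
      calc t * |K| ≤ (d / (2 * (|K| + 1))) * |K| := by
            apply mul_le_mul_of_nonneg_right h4 (abs_nonneg K)
        _ ≤ d / 2 := by
            rw [div_mul_eq_mul_div, div_le_div_iff₀ (by positivity) (by norm_num)]
            nlinarith [abs_nonneg K]
    nlinarith [neg_abs_le K, ht0.le]

-- keyA lemma, to be appended after helpers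
lemma keyA {C : Set E2} (hconv : Convex ℝ C) {O : E2} (hO : O ∈ interior C)
    (A B : ℝ → E2)
    (hchord : ∀ φ : ℝ,
      {x | ∃ t : ℝ, x = O + t • lineDir φ} ∩ C = segment ℝ (A φ) (B φ))
    (f : ℝ → ℝ) (hf : ∀ φ, f φ = dist (A φ) (B φ))
    (φs : ℝ) (hmin : IsLocalMin f φs)
    (ha : ⟪A φs - O, lineDir φs⟫ < 0) :
    ∃ v, IsSupportVec C (A φs) v ∧
      ∀ w, IsSupportVec C (A φs) w → ∃ c : ℝ, 0 < c ∧ w = c • v := by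
  classical
  set u : ℝ → E2 := lineDir with hu
  set a : ℝ → ℝ := fun φ => ⟪A φ - O, u φ⟫ with ha_def
  set b : ℝ → ℝ := fun φ => ⟪B φ - O, u φ⟫ with hb_def
  -- membership and representation of A φ, B φ
  have hmemA : ∀ φ, A φ ∈ {x : E2 | ∃ t : ℝ, x = O + t • u φ} ∩ C := by
    intro φ; rw [hchord φ]; exact left_mem_segment ℝ _ _
  have hmemB : ∀ φ, B φ ∈ {x : E2 | ∃ t : ℝ, x = O + t • u φ} ∩ C := by
    intro φ; rw [hchord φ]; exact right_mem_segment ℝ _ _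
  have hAC : ∀ φ, A φ ∈ C := fun φ => (hmemA φ).2
  have hBC : ∀ φ, B φ ∈ C := fun φ => (hmemB φ).2
  have hcoord : ∀ (x : E2) (φ) (t : ℝ), x = O + t • u φ → ⟪x - O, u φ⟫ = t := by
    intro x φ t hx
    rw [hx]
    have : O + t • u φ - O = t • u φ := by abel
    rw [this, real_inner_smul_left, inner_lineDir_self, mul_one]
  have hrepA : ∀ φ, A φ = O + a φ • u φ := by
    intro φ
    obtain ⟨t, ht⟩ := (hmemA φ).1
    rw [ha_def]; simp only
    rw [hcoord (A φ) φ t ht]; exact ht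
  have hrepB : ∀ φ, B φ = O + b φ • u φ := by
    intro φ
    obtain ⟨t, ht⟩ := (hmemB φ).1
    rw [hb_def]; simp only
    rw [hcoord (B φ) φ t ht]; exact ht
  -- the chord coordinates at φs bound all coordinates of points of C on the line
  have hseg : ∀ t : ℝ, O + t • u φs ∈ C →
      min (a φs) (b φs) ≤ t ∧ t ≤ max (a φs) (b φs) := by
    intro t htC
    have hx : O + t • u φs ∈ segment ℝ (A φs) (B φs) := by
      rw [← hchord φs]; exact ⟨⟨t, rfl⟩, htC⟩
    obtain ⟨r, s, hr, hs, hrs, hx⟩ := hx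
    have ht : t = r * a φs + s * b φs := by
      have h1 : ⟪(O + t • u φs) - O, u φs⟫ = t := hcoord _ _ _ rfl
      rw [← hx, inner_sub_left, inner_add_left, real_inner_smul_left,
        real_inner_smul_left] at h1
      have ha1 : a φs = ⟪A φs, u φs⟫ - ⟪O, u φs⟫ := inner_sub_left _ _ _
      have hb1 : b φs = ⟪B φs, u φs⟫ - ⟪O, u φs⟫ := inner_sub_left _ _ _
      rw [ha1, hb1]
      linear_combination -h1 + (inner ℝ O (u φs) : ℝ) * hrs
    constructor
    · rcases le_total (a φs) (b φs) with h | h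
      · rw [min_eq_left h, ht]; nlinarith
      · rw [min_eq_right h, ht]; nlinarith
    · rcases le_total (a φs) (b φs) with h | h
      · rw [max_eq_right h, ht]; nlinarith
      · rw [max_eq_left h, ht]; nlinarith
  -- small ball around O
  obtain ⟨ε, hε, hball⟩ := Metric.isOpen_iff.1 isOpen_interior O hO
  have hptC : ∀ s : ℝ, |s| < ε → O + s • u φs ∈ C := by
    intro s hs
    apply interior_subset
    apply hball
    rw [Metric.mem_ball, dist_eq_norm]
    have : O + s • u φs - O = s • u φs := by abel
    rw [this, norm_smul, norm_lineDir, mul_one, Real.norm_eq_abs]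
    exact hs
  have hbpos : 0 < b φs := by
    have h1 := (hseg (ε/2) (hptC (ε/2) (by rw [abs_of_pos (by linarith)]; linarith))).2
    by_contra hb
    push_neg at hb
    have : max (a φs) (b φs) ≤ 0 := max_le (le_of_lt ha) hb
    linarith
  have hmin_eq : min (a φs) (b φs) = a φs := min_eq_left (by linarith)
  have hmax_eq : max (a φs) (b φs) = b φs := max_eq_right (by linarith)
  -- A φs and B φs are not interior points
  have hAni : A φs ∉ interior C := by
    intro hAi
    obtain ⟨δ, hδ, hballA⟩ := Metric.isOpen_iff.1 isOpen_interior _ hAi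
    have hx : O + (a φs - δ/2) • u φs ∈ C := by
      apply interior_subset; apply hballA
      rw [Metric.mem_ball, dist_eq_norm]
      have : O + (a φs - δ/2) • u φs - A φs = (-(δ/2)) • u φs := by
        rw [hrepA φs, show (-(δ/2) : ℝ) = (a φs - δ/2) - a φs by ring, sub_smul]
        module
      rw [this, norm_smul, norm_lineDir, mul_one, Real.norm_eq_abs, abs_neg,
        abs_of_pos (by linarith)]
      linarith
    have := (hseg _ hx).1
    rw [hmin_eq] at this
    linarith
  have hBni : B φs ∉ interior C := by
    intro hBi
    obtain ⟨δ, hδ, hballB⟩ := Metric.isOpen_iff.1 isOpen_interior _ hBi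
    have hx : O + (b φs + δ/2) • u φs ∈ C := by
      apply interior_subset; apply hballB
      rw [Metric.mem_ball, dist_eq_norm]
      have : O + (b φs + δ/2) • u φs - B φs = (δ/2) • u φs := by
        rw [hrepB φs, show ((δ/2) : ℝ) = (b φs + δ/2) - b φs by ring, sub_smul]
        module
      rw [this, norm_smul, norm_lineDir, mul_one, Real.norm_eq_abs,
        abs_of_pos (by linarith)]
      linarith
    have := (hseg _ hx).2
    rw [hmax_eq] at this
    linarith
  -- supporting vectors exist
  obtain ⟨v, hv⟩ := exists_supportVec hconv hO hAni
  obtain ⟨z, hz⟩ := exists_supportVec hconv hO hBni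
  -- sign of ⟪u φs, ·⟫ for support vectors
  have hsignA : ∀ w, IsSupportVec C (A φs) w → ⟪u φs, w⟫ < 0 := by
    intro w hw
    have h1 : ⟪O - A φs, w⟫ < 0 := inner_lt_of_interior hw hO
    have h2 : O - A φs = (-(a φs)) • u φs := by
      rw [hrepA φs, neg_smul]
      abel
    rw [h2, real_inner_smul_left] at h1
    nlinarith
  have hsignB : ⟪u φs, z⟫ > 0 := by
    have h1 : ⟪O - B φs, z⟫ < 0 := inner_lt_of_interior hz hO
    have h2 : O - B φs = (-(b φs)) • u φs := by
      rw [hrepB φs, neg_smul]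
      abel
    rw [h2, real_inner_smul_left] at h1
    nlinarith
  -- support inequalities along lines
  have hineqA : ∀ w, IsSupportVec C (A φs) w → ∀ (φ) (t : ℝ), O + t • u φ ∈ C →
      t * ⟪u φ, w⟫ ≤ a φs * ⟪u φs, w⟫ := by
    intro w hw φ t htC
    have h1 := hw.2 _ htC
    have h2 : O + t • u φ - A φs = t • u φ - a φs • u φs := by
      rw [hrepA φs]; abel
    rw [h2, inner_sub_left, real_inner_smul_left, real_inner_smul_left] at h1
    linarith
  have hineqB : ∀ (φ) (t : ℝ), O + t • u φ ∈ C →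
      t * ⟪u φ, z⟫ ≤ b φs * ⟪u φs, z⟫ := by
    intro φ t htC
    have h1 := hz.2 _ htC
    have h2 : O + t • u φ - B φs = t • u φ - b φs • u φs := by
      rw [hrepB φs]; abel
    rw [h2, inner_sub_left, real_inner_smul_left, real_inner_smul_left] at h1
    linarith
  -- chord length in coordinates
  have hflen : ∀ φ, f φ = |b φ - a φ| := by
    intro φ
    rw [hf φ, dist_eq_norm]
    have h1 : A φ - B φ = (a φ - b φ) • u φ := by
      rw [hrepA φ, hrepB φ, sub_smul]; abel
    rw [h1, norm_smul, norm_lineDir, mul_one, Real.norm_eq_abs, abs_sub_comm]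
  have hfφs : f φs = b φs - a φs := by
    rw [hflen φs, abs_of_pos (by linarith)]
  have pz_ne : ⟪u φs, z⟫ ≠ 0 := ne_of_gt hsignB
  -- the central claim, for an arbitrary supporting vector w at A φs
  have claim : ∀ w, IsSupportVec C (A φs) w →
      a φs * (w 0 * (-Real.sin φs) + w 1 * Real.cos φs) * ⟪u φs, z⟫ =
        b φs * (z 0 * (-Real.sin φs) + z 1 * Real.cos φs) * ⟪u φs, w⟫ := by
    intro w hw
    have hpw : ⟪u φs, w⟫ < 0 := hsignA w hw
    have pw_ne : ⟪u φs, w⟫ ≠ 0 := ne_of_lt hpw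
    set G : ℝ → ℝ := fun φ =>
      b φs * ⟪u φs, z⟫ / ⟪u φ, z⟫ - a φs * ⟪u φs, w⟫ / ⟪u φ, w⟫ with hG
    have ev1 : ∀ᶠ φ in nhds φs, ⟪u φ, w⟫ < 0 :=
      (isOpen_lt (continuous_p w) continuous_const).eventually_mem hpw
    have ev2 : ∀ᶠ φ in nhds φs, (0:ℝ) < ⟪u φ, z⟫ :=
      (isOpen_lt continuous_const (continuous_p z)).eventually_mem hsignB
    have ev3 : ∀ᶠ φ in nhds φs, f φs ≤ f φ := hmin
    have hGφs : G φs = b φs - a φs := by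
      rw [hG]; simp only
      rw [mul_div_assoc, div_self pz_ne, mul_div_assoc, div_self pw_ne]
      ring
    have hGmin : IsLocalMin G φs := by
      refine Filter.Eventually.mono ((ev1.and ev2).and ev3) ?_
      rintro φ ⟨⟨h1, h2⟩, h3⟩
      have hAφ : O + a φ • u φ ∈ C := by rw [← hrepA φ]; exact hAC φ
      have hBφ : O + b φ • u φ ∈ C := by rw [← hrepB φ]; exact hBC φ
      have haφ1 : a φs * ⟪u φs, w⟫ / ⟪u φ, w⟫ ≤ a φ := by
        rw [div_le_iff_of_neg h1]
        exact hineqA w hw φ (a φ) hAφ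
      have hbφ1 : a φs * ⟪u φs, w⟫ / ⟪u φ, w⟫ ≤ b φ := by
        rw [div_le_iff_of_neg h1]
        exact hineqA w hw φ (b φ) hBφ
      have haφ2 : a φ ≤ b φs * ⟪u φs, z⟫ / ⟪u φ, z⟫ := by
        rw [le_div_iff₀ h2]
        exact hineqB φ (a φ) hAφ
      have hbφ2 : b φ ≤ b φs * ⟪u φs, z⟫ / ⟪u φ, z⟫ := by
        rw [le_div_iff₀ h2]
        exact hineqB φ (b φ) hBφ
      have hfG : f φ ≤ G φ := by
        rw [hflen φ, hG]
        simp only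
        rw [abs_le]
        constructor <;> linarith
      have : G φs ≤ G φ := by
        rw [hGφs, ← hfφs]
        linarith
      exact this
    have hdz : HasDerivAt (fun φ => ⟪u φ, z⟫)
        (z 0 * (-Real.sin φs) + z 1 * Real.cos φs) φs := hasDerivAt_p z φs
    have hdw : HasDerivAt (fun φ => ⟪u φ, w⟫)
        (w 0 * (-Real.sin φs) + w 1 * Real.cos φs) φs := hasDerivAt_p w φs
    have hG' : HasDerivAt G
        ((0 * ⟪u φs, z⟫ - b φs * ⟪u φs, z⟫ * (z 0 * (-Real.sin φs) + z 1 * Real.cos φs))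
            / ⟪u φs, z⟫ ^ 2 -
          (0 * ⟪u φs, w⟫ - a φs * ⟪u φs, w⟫ * (w 0 * (-Real.sin φs) + w 1 * Real.cos φs))
            / ⟪u φs, w⟫ ^ 2) φs :=
      ((hasDerivAt_const φs (b φs * ⟪u φs, z⟫)).div hdz pz_ne).sub
        ((hasDerivAt_const φs (a φs * ⟪u φs, w⟫)).div hdw pw_ne)
    have heq := hGmin.hasDerivAt_eq_zero hG'
    set qz : ℝ := z 0 * (-Real.sin φs) + z 1 * Real.cos φs
    set qw : ℝ := w 0 * (-Real.sin φs) + w 1 * Real.cos φs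
    set pz : ℝ := ⟪u φs, z⟫
    set pw : ℝ := ⟪u φs, w⟫
    have heq2 : (a φs * qw * pz - b φs * qz * pw) * (pz * pw) = 0 := by
      have hmul := congrArg (fun x : ℝ => x * (pz ^ 2 * pw ^ 2)) heq
      simp only at hmul
      field_simp at hmul
      linear_combination (pz * pw) * hmul
    rcases mul_eq_zero.1 heq2 with h | h
    · linarith [sub_eq_zero.1 (by linarith : a φs * qw * pz - b φs * qz * pw = 0)]
    · exact absurd h (mul_ne_zero pz_ne pw_ne)
  -- conclude uniqueness
  refine ⟨v, hv, ?_⟩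
  intro w hw
  have hpv : ⟪u φs, v⟫ < 0 := hsignA v hv
  have hpw : ⟪u φs, w⟫ < 0 := hsignA w hw
  have pv_ne : ⟪u φs, v⟫ ≠ 0 := ne_of_lt hpv
  have hv_eq := claim v hv
  have hw_eq := claim w hw
  have ha_ne : a φs ≠ 0 := ne_of_lt ha
  have cross : (v 0 * (-Real.sin φs) + v 1 * Real.cos φs) * ⟪u φs, w⟫
      = (w 0 * (-Real.sin φs) + w 1 * Real.cos φs) * ⟪u φs, v⟫ := by
    have h1 : (a φs * ⟪u φs, z⟫) *
        ((v 0 * (-Real.sin φs) + v 1 * Real.cos φs) * ⟪u φs, w⟫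
          - (w 0 * (-Real.sin φs) + w 1 * Real.cos φs) * ⟪u φs, v⟫) = 0 := by
      linear_combination ⟪u φs, w⟫ * hv_eq - ⟪u φs, v⟫ * hw_eq
    rcases mul_eq_zero.1 h1 with h | h
    · exact absurd h (mul_ne_zero ha_ne pz_ne)
    · linarith [sub_eq_zero.1 h]
  rw [inner_lineDir φs v, inner_lineDir φs w] at cross
  have hsc := Real.sin_sq_add_cos_sq φs
  have crossPoly : v 1 * w 0 = v 0 * w 1 := by
    linear_combination cross - (v 1 * w 0 - v 0 * w 1) * hsc
  refine ⟨⟪u φs, w⟫ / ⟪u φs, v⟫, div_pos_iff.2 (Or.inr ⟨hpw, hpv⟩), ?_⟩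
  have hw0 : w 0 = (⟪u φs, w⟫ / ⟪u φs, v⟫) * v 0 := by
    rw [div_mul_eq_mul_div, eq_div_iff pv_ne, inner_lineDir φs v, inner_lineDir φs w]
    linear_combination (Real.sin φs) * crossPoly
  have hw1 : w 1 = (⟪u φs, w⟫ / ⟪u φs, v⟫) * v 1 := by
    rw [div_mul_eq_mul_div, eq_div_iff pv_ne, inner_lineDir φs v, inner_lineDir φs w]
    linear_combination (-Real.cos φs) * crossPoly
  ext i
  rw [PiLp.smul_apply, smul_eq_mul]
  fin_cases i
  · exact hw0
  · exact hw1

/-- Let `C ⊆ ℝ²` be compact convex with nonempty interior and `O` an interior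
point.  For each `φ`, let `[A φ, B φ] = l(φ) ∩ C` be the chord of `C` cut by the
line through `O` in direction `φ`, and `f φ` its length.  If `φ*` is a local
minimizer of `f`, then `C` has a unique supporting line at `A φ*` and a unique
supporting line at `B φ*` (uniqueness of the line = uniqueness of its normal
direction up to positive scaling). -/
theorem statement8 (C : Set (EuclideanSpace ℝ (Fin 2)))
    (hC : IsCompact C) (hconv : Convex ℝ C) (hint : (interior C).Nonempty)
    (O : EuclideanSpace ℝ (Fin 2)) (hO : O ∈ interior C)
    (A B : ℝ → EuclideanSpace ℝ (Fin 2))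
    (hchord : ∀ φ : ℝ,
      {x | ∃ t : ℝ, x = O + t • lineDir φ} ∩ C = segment ℝ (A φ) (B φ))
    (f : ℝ → ℝ) (hf : ∀ φ, f φ = dist (A φ) (B φ))
    (φs : ℝ) (hmin : IsLocalMin f φs) :
    (∃ v, IsSupportVec C (A φs) v ∧
      ∀ w, IsSupportVec C (A φs) w → ∃ c : ℝ, 0 < c ∧ w = c • v) ∧
    (∃ v, IsSupportVec C (B φs) v ∧
      ∀ w, IsSupportVec C (B φs) w → ∃ c : ℝ, 0 < c ∧ w = c • v) := by
  have hpi : φs - π + π = φs := by ring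
  have hld : lineDir (φs - π) = -lineDir φs := by
    have h := lineDir_add_pi (φs - π)
    rw [hpi] at h
    rw [h, neg_neg]
  -- coordinates at φs
  set as : ℝ := ⟪A φs - O, lineDir φs⟫ with has_def
  set bs : ℝ := ⟪B φs - O, lineDir φs⟫ with hbs_def
  have hcoord : ∀ (t : ℝ), ⟪(O + t • lineDir φs) - O, lineDir φs⟫ = t := by
    intro t
    have h1 : O + t • lineDir φs - O = t • lineDir φs := by abel
    rw [h1, real_inner_smul_left, inner_lineDir_self, mul_one]
  have hseg : ∀ t : ℝ, O + t • lineDir φs ∈ C →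
      min as bs ≤ t ∧ t ≤ max as bs := by
    intro t htC
    have hx : O + t • lineDir φs ∈ segment ℝ (A φs) (B φs) := by
      rw [← hchord φs]; exact ⟨⟨t, rfl⟩, htC⟩
    obtain ⟨r, s, hr, hs, hrs, hx⟩ := hx
    have ht : t = r * as + s * bs := by
      have h1 := hcoord t
      rw [← hx, inner_sub_left, inner_add_left, real_inner_smul_left,
        real_inner_smul_left] at h1
      have ha1 : as = ⟪A φs, lineDir φs⟫ - ⟪O, lineDir φs⟫ := inner_sub_left _ _ _
      have hb1 : bs = ⟪B φs, lineDir φs⟫ - ⟪O, lineDir φs⟫ := inner_sub_left _ _ _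
      rw [ha1, hb1]
      linear_combination -h1 + (inner ℝ O (lineDir φs) : ℝ) * hrs
    constructor
    · rw [ht]
      calc min as bs = r * min as bs + s * min as bs := by
            rw [← add_mul, hrs, one_mul]
        _ ≤ r * as + s * bs :=
            add_le_add (mul_le_mul_of_nonneg_left (min_le_left _ _) hr)
              (mul_le_mul_of_nonneg_left (min_le_right _ _) hs)
    · rw [ht]
      calc r * as + s * bs ≤ r * max as bs + s * max as bs :=
            add_le_add (mul_le_mul_of_nonneg_left (le_max_left _ _) hr)
              (mul_le_mul_of_nonneg_left (le_max_right _ _) hs)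
        _ = max as bs := by rw [← add_mul, hrs, one_mul]
  obtain ⟨ε, hε, hball⟩ := Metric.isOpen_iff.1 isOpen_interior O hO
  have hptC : ∀ s : ℝ, |s| < ε → O + s • lineDir φs ∈ C := by
    intro s hs
    apply interior_subset
    apply hball
    rw [Metric.mem_ball, dist_eq_norm]
    have h1 : O + s • lineDir φs - O = s • lineDir φs := by abel
    rw [h1, norm_smul, norm_lineDir, mul_one, Real.norm_eq_abs]
    exact hs
  have hmaxpos : 0 < max as bs := by
    have h1 := (hseg (ε/2) (hptC (ε/2) (by rw [abs_of_pos (by linarith)]; linarith))).2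
    linarith
  have hminneg : min as bs < 0 := by
    have h1 := (hseg (-(ε/2)) (hptC (-(ε/2))
      (by rw [abs_neg, abs_of_pos (by linarith)]; linarith))).1
    linarith
  -- the two possible orientations
  rcases lt_or_ge as 0 with hneg | hpos
  · -- as < 0 < bs
    have hbpos : 0 < bs := by
      by_contra hb
      push_neg at hb
      have : max as bs ≤ 0 := max_le (le_of_lt hneg) hb
      linarith
    constructor
    · exact keyA hconv hO A B hchord f hf φs hmin hneg
    · -- shift by π and swap
      have hchord' : ∀ φ : ℝ, {x | ∃ t : ℝ, x = O + t • lineDir φ} ∩ C =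
          segment ℝ (B (φ + π)) (A (φ + π)) := by
        intro φ
        rw [← lineSet_pi O φ, hchord (φ + π), segment_symm]
      have hf' : ∀ φ, f (φ + π) = dist (B (φ + π)) (A (φ + π)) := fun φ => by
        rw [hf, dist_comm]
      have hmin' : IsLocalMin (fun φ => f (φ + π)) (φs - π) := by
        have ht : Filter.Tendsto (fun x : ℝ => x + π) (nhds (φs - π)) (nhds φs) := by
          have h2 : Continuous (fun x : ℝ => x + π) :=
            continuous_id.add continuous_const
          simpa [hpi] using h2.tendsto (φs - π)
        have hev := ht.eventually hmin
        show ∀ᶠ x in nhds (φs - π), f ((φs - π) + π) ≤ f (x + π)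
        rw [hpi]
        exact hev
      have hsign' : ⟪B ((φs - π) + π) - O, lineDir (φs - π)⟫ < 0 := by
        rw [hpi, hld, inner_neg_right]
        linarith
      have result := keyA hconv hO (fun φ => B (φ + π)) (fun φ => A (φ + π))
        hchord' (fun φ => f (φ + π)) hf' (φs - π) hmin' hsign'
      simp only [hpi] at result
      exact result
  · -- bs < 0 < as
    have hbneg : bs < 0 := by
      rcases min_cases as bs with ⟨h1, h2⟩ | ⟨h1, h2⟩ <;> [linarith; linarith]
    have hapos : 0 < as := by
      rcases max_cases as bs with ⟨h1, h2⟩ | ⟨h1, h2⟩ <;> [linarith; linarith]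
    constructor
    · -- shift by π, no swap
      have hchord' : ∀ φ : ℝ, {x | ∃ t : ℝ, x = O + t • lineDir φ} ∩ C =
          segment ℝ (A (φ + π)) (B (φ + π)) := by
        intro φ
        rw [← lineSet_pi O φ, hchord (φ + π)]
      have hf' : ∀ φ, f (φ + π) = dist (A (φ + π)) (B (φ + π)) := fun φ => hf _
      have hmin' : IsLocalMin (fun φ => f (φ + π)) (φs - π) := by
        have ht : Filter.Tendsto (fun x : ℝ => x + π) (nhds (φs - π)) (nhds φs) := by
          have h2 : Continuous (fun x : ℝ => x + π) :=
            continuous_id.add continuous_const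
          simpa [hpi] using h2.tendsto (φs - π)
        have hev := ht.eventually hmin
        show ∀ᶠ x in nhds (φs - π), f ((φs - π) + π) ≤ f (x + π)
        rw [hpi]
        exact hev
      have hsign' : ⟪A ((φs - π) + π) - O, lineDir (φs - π)⟫ < 0 := by
        rw [hpi, hld, inner_neg_right]
        linarith
      have result := keyA hconv hO (fun φ => A (φ + π)) (fun φ => B (φ + π))
        hchord' (fun φ => f (φ + π)) hf' (φs - π) hmin' hsign'
      simp only [hpi] at result
      exact result
    · -- swap A and B, no shift
      have hchord' : ∀ φ : ℝ, {x | ∃ t : ℝ, x = O + t • lineDir φ} ∩ C =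
          segment ℝ (B φ) (A φ) := by
        intro φ
        rw [hchord φ, segment_symm]
      have hf' : ∀ φ, f φ = dist (B φ) (A φ) := fun φ => by rw [hf, dist_comm]
      exact keyA hconv hO B A hchord' f hf' φs hmin hbneg
end

section
/- Let 0 < θ < π/2 and let E be the vertex of an angle of measure θ with arms l₁, l₂. Let A ∈ l₁, B ∈ l₂ with B strictly between O and A, where O is a point on line AB outside the angle and outside its vertical opposite. Suppose the perpendicular to l₁ at A, the perpendicular to l₂ at B, and the perpendicular to line AB at O meet at a common point C. Then 2|OA|/|AB| ≤ 1 + 1/sin θ. -/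
set_option maxHeartbeats 1000000


open Real RealInnerProductSpace EuclideanGeometry

/-- Let `E` be the vertex of an angle of measure `θ = ∠AEB ∈ (0, π/2)` with
`A`, `B` on its two arms, and let `O` be a point of line `AB` with `B` strictly
between `O` and `A`, `O` lying outside the angle and outside its vertical
opposite. If the perpendicular to `EA` at `A`, the perpendicular to `EB` at `B`
and the perpendicular to line `AB` at `O` meet at a common point `C`, then
`2|OA|/|AB| ≤ 1 + 1/sin θ`. -/
theorem statement12 (E A B O C : EuclideanSpace ℝ (Fin 2)) (θ : ℝ)
    (hθ : θ = EuclideanGeometry.angle A E B) (hθ0 : 0 < θ) (hθπ : θ < π / 2)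
    (hncol : ¬ Collinear ℝ ({E, A, B} : Set (EuclideanSpace ℝ (Fin 2))))
    (hbetween : B ∈ openSegment ℝ O A)
    (houtside : ∀ s t : ℝ, 0 ≤ s → 0 ≤ t → O ≠ E + s • (A - E) + t • (B - E))
    (houtside' : ∀ s t : ℝ, 0 ≤ s → 0 ≤ t → O ≠ E - s • (A - E) - t • (B - E))
    (hperpA : ⟪C - A, A - E⟫ = 0)
    (hperpB : ⟪C - B, B - E⟫ = 0)
    (hperpO : ⟪C - O, A - O⟫ = 0) :
    2 * dist O A / dist A B ≤ 1 + 1 / Real.sin θ := by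
  -- basic nondegeneracies
  have hEA : E ≠ A := by
    rintro rfl
    exact hncol (by simpa using (collinear_pair ℝ E B))
  have hEB : E ≠ B := by
    rintro rfl
    exact hncol (by
      have : ({E, A, E} : Set (EuclideanSpace ℝ (Fin 2))) = {E, A} := by
        ext x; simp [or_comm, or_assoc, or_left_comm]
      rw [this]; exact collinear_pair ℝ E A)
  have hAB : A ≠ B := by
    rintro rfl
    exact hncol (by
      have : ({E, A, A} : Set (EuclideanSpace ℝ (Fin 2))) = {E, A} := by
        simp
      rw [this]; exact collinear_pair ℝ E A)
  set a : ℝ := ‖A - E‖ with ha_def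
  set b : ℝ := ‖B - E‖ with hb_def
  set d : ℝ := ‖B - A‖ with hd_def
  have ha : 0 < a := by
    rw [ha_def, norm_pos_iff, sub_ne_zero]; exact fun h => hEA h.symm
  have hb : 0 < b := by
    rw [hb_def, norm_pos_iff, sub_ne_zero]; exact fun h => hEB h.symm
  have hd : 0 < d := by
    rw [hd_def, norm_pos_iff, sub_ne_zero]; exact fun h => hAB h.symm
  -- the betweenness condition
  rw [openSegment_eq_image] at hbetween
  obtain ⟨t, ht, hB⟩ := hbetween
  simp only [Set.mem_Ioo] at ht
  have hμ : 0 < 1 - t := by linarith [ht.2]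
  have hBA : B - A = (1 - t) • (O - A) := by
    rw [← hB]
    rw [smul_sub]
    module
  have hOA : O - A = (1 - t)⁻¹ • (B - A) := by
    rw [hBA, smul_smul, inv_mul_cancel₀ (ne_of_gt hμ), one_smul]
  set L : ℝ := (1 - t)⁻¹ with hL_def
  have hL : 0 < L := inv_pos.2 hμ
  -- dist O A = L * d
  have hdOA : dist O A = L * d := by
    rw [dist_eq_norm, hOA, norm_smul, Real.norm_eq_abs, abs_of_pos hL, hd_def]
  have hdAB : dist A B = d := by
    rw [dist_eq_norm, hd_def, norm_sub_rev]
  -- key inner product computation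
  have h1 : ⟪C - A, B - A⟫ = L * d ^ 2 := by
    have e1 : C - O = (C - A) - L • (B - A) := by
      have : O = A + L • (B - A) := by rw [← hOA]; abel
      rw [this]; abel
    have e2 : A - O = -(L • (B - A)) := by
      have : O = A + L • (B - A) := by rw [← hOA]; abel
      rw [this]; abel
    rw [e1, e2, inner_neg_right, neg_eq_zero, inner_sub_left,
      real_inner_smul_right, real_inner_smul_left, real_inner_smul_right,
      real_inner_self_eq_norm_sq, sub_eq_zero] at hperpO
    have h := mul_left_cancel₀ (ne_of_gt hL) hperpO
    rw [h, ← hd_def]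
  have h2 : ⟪C - A, B - A⟫ = b ^ 2 - ⟪A - E, B - E⟫ := by
    have e1 : ⟪C - A, B - A⟫ = ⟪C - A, B - E⟫ - ⟪C - A, A - E⟫ := by
      rw [← inner_sub_right]; congr 1; abel
    have e2 : ⟪C - A, B - E⟫ = ⟪C - B, B - E⟫ + ⟪B - A, B - E⟫ := by
      rw [← inner_add_left]; congr 1; abel
    have e3 : ⟪B - A, B - E⟫ = ⟪B - E, B - E⟫ - ⟪A - E, B - E⟫ := by
      rw [← inner_sub_left]; congr 1; abel
    rw [e1, e2, e3, hperpA, hperpB, real_inner_self_eq_norm_sq, ← hb_def]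
    ring
  -- trigonometry
  set s : ℝ := Real.sin θ with hs_def
  set c : ℝ := Real.cos θ with hc_def
  have hs : 0 < s := Real.sin_pos_of_pos_of_lt_pi hθ0 (by linarith [Real.pi_pos])
  have hc : 0 < c := Real.cos_pos_of_mem_Ioo ⟨by linarith, hθπ⟩
  have hcs : s ^ 2 + c ^ 2 = 1 := Real.sin_sq_add_cos_sq θ
  have hinner : ⟪A - E, B - E⟫ = a * b * c := by
    have hcos : c = ⟪A - E, B - E⟫ / (a * b) := by
      rw [hc_def, hθ]
      rw [EuclideanGeometry.angle]
      have : (A -ᵥ E : EuclideanSpace ℝ (Fin 2)) = A - E := rfl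
      rw [show (A -ᵥ E : EuclideanSpace ℝ (Fin 2)) = A - E from rfl,
        show (B -ᵥ E : EuclideanSpace ℝ (Fin 2)) = B - E from rfl]
      exact InnerProductGeometry.cos_angle _ _
    rw [hcos]
    field_simp
  have hd2 : d ^ 2 = a ^ 2 + b ^ 2 - 2 * (a * b * c) := by
    have : B - A = (B - E) - (A - E) := by abel
    rw [hd_def, this, ← hinner, @norm_sub_sq_real, real_inner_comm, ← ha_def, ← hb_def]
    ring
  have hkey : L * d ^ 2 = b ^ 2 - a * b * c := by rw [← h1, h2, hinner]
  -- final inequality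
  rw [hdOA, hdAB]
  have hs1 : s < 1 := by nlinarith
  have hF : 0 ≤ (1 + s) * a ^ 2 + (1 - s) * b ^ 2 - 2 * (a * b * c) := by
    nlinarith [sq_nonneg (c * a - (1 - s) * b), hcs, hs1, sq_nonneg a,
      mul_pos ha hb, hc.le, hs.le]
  have hL2' : 2 * L * s * d ^ 2 ≤ (1 + s) * d ^ 2 := by
    calc 2 * L * s * d ^ 2 = 2 * s * (b ^ 2 - a * b * c) := by
          rw [show 2 * L * s * d ^ 2 = 2 * s * (L * d ^ 2) by ring, hkey]
      _ ≤ (1 + s) * (a ^ 2 + b ^ 2 - 2 * (a * b * c)) := by linarith [hF]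
      _ = (1 + s) * d ^ 2 := by rw [hd2]
  have hL2 : 2 * L * s ≤ 1 + s :=
    le_of_mul_le_mul_right hL2' (pow_pos hd 2)
  have e : 2 * (L * d) / d = 2 * L := by
    field_simp
  rw [e]
  have h1s : (1 : ℝ) + 1 / s = (1 + s) / s := by
    field_simp
    ring
  rw [h1s, le_div_iff₀ hs]
  linarith
end

section
/- Let C ⊂ ℝⁿ (n ≥ 2) be a closed convex set with nonempty interior, O an interior point, and [A*B*] a local maximizer of chord length through O. If there is a supporting hyperplane H of C at A* such that A* is an interior point of C ∩ H relative to H, then B* is an extreme point of C. -/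
open Real RealInnerProductSpace



lemma aux_poly (g1 g2 g3 g4 δ : ℝ) (hδ : 0 < δ)
    (h : ∀ s : ℝ, |s| < δ → g1*s + g2*s^2 + g3*s^3 + g4*s^4 ≤ 0) :
    g1 = 0 ∧ g2 ≤ 0 := by
  have key : ∀ s : ℝ, |s| < δ → |s| ≤ 1 →
      g1*s ≤ (|g2| + |g3| + |g4|) * s^2 := by
    intro s hs hs1
    have h0 := h s hs
    have e2 : -(|g2| * s^2) ≤ g2*s^2 := by
      nlinarith [mul_le_mul_of_nonneg_right (neg_abs_le g2) (sq_nonneg s)]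
    have habs3 : |g3 * s^3| ≤ |g3| * s^2 := by
      rw [abs_mul, abs_pow]
      have h1 : |s|^3 ≤ |s|^2 := pow_le_pow_of_le_one (abs_nonneg s) hs1 (by norm_num)
      calc |g3| * |s|^3 ≤ |g3| * |s|^2 := by nlinarith [abs_nonneg g3]
      _ = |g3| * s^2 := by rw [sq_abs]
    have habs4 : |g4 * s^4| ≤ |g4| * s^2 := by
      rw [abs_mul, abs_pow]
      have h1 : |s|^4 ≤ |s|^2 := pow_le_pow_of_le_one (abs_nonneg s) hs1 (by norm_num)
      calc |g4| * |s|^4 ≤ |g4| * |s|^2 := by nlinarith [abs_nonneg g4]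
      _ = |g4| * s^2 := by rw [sq_abs]
    nlinarith [neg_abs_le (g3*s^3), neg_abs_le (g4*s^4)]
  have hg1 : g1 = 0 := by
    by_contra h1
    have hg1pos : 0 < |g1| := abs_pos.mpr h1
    set M : ℝ := |g2| + |g3| + |g4| + 1 with hM
    have hMpos : 0 < M := by positivity
    set s0 : ℝ := min (δ/2) (min 1 (|g1|/(2*M))) with hs0
    have hs0pos : 0 < s0 := by
      apply lt_min (by linarith)
      exact lt_min one_pos (by positivity)
    have hs0δ : s0 < δ := lt_of_le_of_lt (min_le_left _ _) (by linarith)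
    have hs01 : s0 ≤ 1 := le_trans (min_le_right _ _) (min_le_left _ _)
    have hs0g : s0 ≤ |g1|/(2*M) := le_trans (min_le_right _ _) (min_le_right _ _)
    have k1 := key s0 (by rwa [abs_of_pos hs0pos]) (by rwa [abs_of_pos hs0pos])
    have k2 := key (-s0) (by rwa [abs_neg, abs_of_pos hs0pos])
      (by rwa [abs_neg, abs_of_pos hs0pos])
    have habs : |g1| * s0 ≤ (|g2| + |g3| + |g4|) * s0^2 := by
      rcases abs_cases g1 with ⟨he, _⟩ | ⟨he, _⟩
      · rw [he]; nlinarith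
      · rw [he]; nlinarith
    have hs0M : M * s0 ≤ |g1|/2 := by
      have := mul_le_mul_of_nonneg_left hs0g (le_of_lt hMpos)
      calc M * s0 ≤ M * (|g1|/(2*M)) := this
      _ = |g1|/2 := by field_simp
    nlinarith
  refine ⟨hg1, ?_⟩
  by_contra h2
  push_neg at h2
  set M : ℝ := |g3| + |g4| + 1 with hM
  have hMpos : 0 < M := by positivity
  set s0 : ℝ := min (δ/2) (min 1 (g2/(2*M))) with hs0
  have hs0pos : 0 < s0 := by
    apply lt_min (by linarith)
    exact lt_min one_pos (by positivity)
  have hs0δ : s0 < δ := lt_of_le_of_lt (min_le_left _ _) (by linarith)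
  have hs01 : s0 ≤ 1 := le_trans (min_le_right _ _) (min_le_left _ _)
  have hs0g : s0 ≤ g2/(2*M) := le_trans (min_le_right _ _) (min_le_right _ _)
  have h0 := h s0 (by rwa [abs_of_pos hs0pos])
  rw [hg1] at h0
  have h3a : -(|g3| * s0^3) ≤ g3*s0^3 := by
    nlinarith [mul_le_mul_of_nonneg_right (neg_abs_le g3) (le_of_lt (pow_pos hs0pos 3))]
  have h4a : -(|g4| * s0^3) ≤ g4*s0^4 := by
    have e1 : -(|g4| * s0^4) ≤ g4*s0^4 := by
      nlinarith [mul_le_mul_of_nonneg_right (neg_abs_le g4) (le_of_lt (pow_pos hs0pos 4))]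
    have e2 : |g4| * s0^4 ≤ |g4| * s0^3 := by
      have : s0^4 ≤ s0^3 := by nlinarith [pow_pos hs0pos 3]
      nlinarith [abs_nonneg g4]
    linarith
  have hs0M : M * s0 ≤ g2/2 := by
    have := mul_le_mul_of_nonneg_left hs0g (le_of_lt hMpos)
    calc M * s0 ≤ M * (g2/(2*M)) := this
    _ = g2/2 := by field_simp
  nlinarith [pow_pos hs0pos 2, pow_pos hs0pos 3]


lemma aux_contra (t a0 α q0 q1 q2 : ℝ) (ht0 : 0 < t) (ht1 : t < 1) (ha0 : a0 < 0)
    (hq0 : 0 < q0) (hq2 : 0 < q2) (hCS : q1^2 ≤ 4*(q0*q2))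
    (hg1 : ((1-t)*a0)^2*(a0^2*q1 + 2*a0*α*q0) - 2*a0^2*q0*((1-t)*a0)*α = 0)
    (hg2 : ((1-t)*a0)^2*(a0^2*q2 + 2*a0*α*q1 + α^2*q0) - a0^2*q0*α^2 ≤ 0) :
    False := by
  have ht' : 0 < 1 - t := by linarith
  have ha0' : a0 ≠ 0 := ne_of_lt ha0
  have ha2 : 0 < a0^2 := by positivity
  have hfac : ((1-t)*a0^3) * ((1-t)*a0*q1 - 2*t*q0*α)
      = ((1-t)*a0)^2*(a0^2*q1 + 2*a0*α*q0) - 2*a0^2*q0*((1-t)*a0)*α := by ring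
  have hne : (1-t)*a0^3 ≠ 0 := by
    have : a0^3 < 0 := by nlinarith
    exact mul_ne_zero (ne_of_gt ht') (ne_of_lt this)
  have hE1 : (1-t)*a0*q1 = 2*t*q0*α := by
    have h0 : ((1-t)*a0^3) * ((1-t)*a0*q1 - 2*t*q0*α) = 0 := by rw [hfac, hg1]
    rcases mul_eq_zero.mp h0 with h | h
    · exact absurd h hne
    · linarith
  have hCS' : (2*t*q0*α)^2 ≤ 4*(q0*q2)*((1-t)*a0)^2 := by
    have := mul_le_mul_of_nonneg_left hCS (sq_nonneg ((1-t)*a0))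
    calc (2*t*q0*α)^2 = ((1-t)*a0)^2 * q1^2 := by rw [← hE1]; ring
    _ ≤ ((1-t)*a0)^2 * (4*(q0*q2)) := this
    _ = 4*(q0*q2)*((1-t)*a0)^2 := by ring
  have ht2 : t^2*q0*α^2 ≤ q2*(1-t)^2*a0^2 := by nlinarith
  have hmid : ((1-t)*a0)^2*(2*a0*α*q1) = 4*t*(1-t)*a0^2*q0*α^2 := by
    have hsub : ((1-t)*a0)^2*(2*a0*α*q1) = 2*a0^2*α*(1-t)*((1-t)*a0*q1) := by ring
    rw [hsub, hE1]; ring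
  have hKey2 : (1-t)^2*a0^2*q2*a0^2 ≤ q0*α^2*(3*t^2-2*t)*a0^2 := by
    nlinarith [hg2, hmid]
  have hKey' : (1-t)^2*a0^2*q2 ≤ q0*α^2*(3*t^2-2*t) := by nlinarith [hKey2, ha2]
  rcases eq_or_ne α 0 with h | h
  · rw [h] at hKey'
    nlinarith [mul_pos (mul_pos (pow_pos ht' 2) ha2) hq2]
  · have hα2 : 0 < α^2 := by positivity
    nlinarith [hKey', ht2, mul_pos (mul_pos hq0 hα2) (mul_pos ht0 ht')]



set_option maxHeartbeats 1000000 in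
/-- Let `C ⊆ ℝⁿ` (`n ≥ 2`) be closed convex with nonempty interior, `O` an
interior point, and `[A*, B*]` a local maximizer of chord length through `O`
(endpoints on `∂C`).  If there is a supporting hyperplane
`H = {x | ⟪x - A*, v⟫ = 0}` of `C` at `A*` such that `A*` is an interior point
of `C ∩ H` relative to `H`, then `B*` is an extreme point of `C`. -/
theorem statement15 (n : ℕ) (hn : 2 ≤ n)
    (C : Set (EuclideanSpace ℝ (Fin n)))
    (hC : IsClosed C) (hconv : Convex ℝ C) (hint : (interior C).Nonempty)
    (O : EuclideanSpace ℝ (Fin n)) (hO : O ∈ interior C)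
    (As Bs : EuclideanSpace ℝ (Fin n))
    (hAs : As ∈ frontier C) (hBs : Bs ∈ frontier C) (hOseg : O ∈ segment ℝ As Bs)
    (hlocmax : ∃ U V : Set (EuclideanSpace ℝ (Fin n)),
      IsOpen U ∧ IsOpen V ∧ As ∈ U ∧ Bs ∈ V ∧
      ∀ A ∈ frontier C ∩ U, ∀ B ∈ frontier C ∩ V,
        O ∈ segment ℝ A B → dist A B ≤ dist As Bs)
    (v : EuclideanSpace ℝ (Fin n)) (hv : v ≠ 0)
    (hsupp : ∀ x ∈ C, ⟪x - As, v⟫ ≤ 0)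
    (hrelint : ∃ ε : ℝ, 0 < ε ∧
      Metric.ball As ε ∩ {x : EuclideanSpace ℝ (Fin n) | ⟪x - As, v⟫ = 0} ⊆ C) :
    Bs ∈ Set.extremePoints ℝ C := by

  obtain ⟨U, V, hUopen, hVopen, hAsU, hBsV, hmax⟩ := hlocmax
  obtain ⟨ε, hε, hεsub⟩ := hrelint
  have hAsC : As ∈ C := hC.frontier_subset hAs
  have hBsC : Bs ∈ C := hC.frontier_subset hBs
  have hAsnotint : As ∉ interior C := hAs.2
  have hBsnotint : Bs ∉ interior C := hBs.2
  have hvn : 0 < ‖v‖ := norm_pos_iff.mpr hv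
  -- strict inequality for interior points
  have hIntLt : ∀ z ∈ interior C, ⟪z - As, v⟫ < 0 := by
    intro z hz
    rcases lt_or_eq_of_le (hsupp z (interior_subset hz)) with h | h
    · exact h
    · exfalso
      obtain ⟨r, hr, hball⟩ := Metric.mem_nhds_iff.mp (mem_interior_iff_mem_nhds.mp hz)
      have hz' : z + (r/(2*‖v‖)) • v ∈ C := by
        apply hball
        rw [Metric.mem_ball, dist_eq_norm, add_sub_cancel_left, norm_smul,
          Real.norm_eq_abs, abs_of_pos (by positivity)]
        rw [div_mul_eq_mul_div, mul_comm]
        rw [div_lt_iff₀ (by positivity)]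
        nlinarith
      have hle := hsupp _ hz'
      rw [show z + (r/(2*‖v‖)) • v - As = (z - As) + (r/(2*‖v‖)) • v by abel,
        inner_add_left, real_inner_smul_left, h, real_inner_self_eq_norm_sq] at hle
      have : 0 < r / (2*‖v‖) * ‖v‖^2 := by positivity
      linarith
  -- the parameter t
  obtain ⟨p, t, hp, htn, hpt, hOcomb⟩ := hOseg
  have hOAs' : O ≠ As := fun h => hAsnotint (h ▸ hO)
  have hOBs' : O ≠ Bs := fun h => hBsnotint (h ▸ hO)
  have ht0 : 0 < t := by
    rcases lt_or_eq_of_le htn with h | h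
    · exact h
    · exfalso
      apply hOAs'
      have hp1 : p = 1 := by linarith
      rw [← hOcomb, ← h, hp1]
      simp
  have ht1 : t < 1 := by
    rcases lt_or_eq_of_le (by linarith : t ≤ 1) with h | h
    · exact h
    · exfalso
      apply hOBs'
      have hp0 : p = 0 := by linarith
      rw [← hOcomb, h, hp0]
      simp
  have ht' : 0 < 1 - t := by linarith
  have hp1t : p = 1 - t := by linarith
  rw [hp1t] at hOcomb
  have hOAs : O - As = t • (Bs - As) := by rw [← hOcomb]; module
  have hBsO : Bs - O = (1-t) • (Bs - As) := by rw [← hOcomb]; module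
  have hOeq : O = As + t • (Bs - As) := by rw [← hOcomb]; module
  set a0 : ℝ := ⟪Bs - As, v⟫ with ha0def
  set c : ℝ := ⟪O - As, v⟫ with hcdef
  set b0 : ℝ := ⟪Bs - O, v⟫ with hb0def
  have hc : c = t * a0 := by rw [hcdef, hOAs, real_inner_smul_left]
  have hb0 : b0 = (1-t) * a0 := by rw [hb0def, hBsO, real_inner_smul_left]
  have hcneg : c < 0 := hIntLt O hO
  have ha0 : a0 < 0 := by nlinarith
  have hb0neg : b0 < 0 := by nlinarith
  have ha0b0c : a0 = b0 + c := by rw [hc, hb0]; ring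
  have hBsOne : Bs - O ≠ 0 := by
    intro h
    rw [hb0def, h, inner_zero_left] at hb0neg
    exact lt_irrefl 0 hb0neg
  set q0 : ℝ := ‖Bs - O‖^2 with hq0def
  have hq0 : 0 < q0 := by
    rw [hq0def]
    have := norm_pos_iff.mpr hBsOne
    positivity
  -- assume Bs is not extreme
  by_contra hnotex
  rw [mem_extremePoints] at hnotex
  push_neg at hnotex
  obtain ⟨X, hX, Y, hY, hsegB, hneB⟩ := hnotex hBsC
  obtain ⟨u, u', hu, hu', huu, hcomb⟩ := hsegB
  have hXY : X ≠ Y := by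
    intro h
    have hXB : X = Bs := by
      rw [← hcomb, ← h]
      rw [← add_smul, huu, one_smul]
    exact (hneB hXB) (h ▸ hXB)
  set w : EuclideanSpace ℝ (Fin n) := Y - X with hwdef
  have hwne : w ≠ 0 := sub_ne_zero.mpr (Ne.symm hXY)
  set δ₁ : ℝ := min u u' with hδ₁def
  have hδ₁ : 0 < δ₁ := lt_min hu hu'
  have hBin : ∀ s : ℝ, |s| < δ₁ → Bs + s • w ∈ C := by
    intro s hs
    have hs1 : s < u := lt_of_le_of_lt (le_abs_self s) (lt_of_lt_of_le hs (min_le_left _ _))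
    have hs2 : -u' < s := by
      have := lt_of_le_of_lt (neg_le_abs s) (lt_of_lt_of_le hs (min_le_right _ _))
      linarith
    have hmem := hconv hX hY (by linarith : (0:ℝ) ≤ u - s) (by linarith : (0:ℝ) ≤ u' + s)
      (by linarith : (u - s) + (u' + s) = 1)
    have he : (u - s) • X + (u' + s) • Y = Bs + s • w := by
      rw [← hcomb, hwdef]; module
    rwa [he] at hmem
  set α : ℝ := ⟪w, v⟫ with hαdef
  set q1 : ℝ := 2 * ⟪Bs - O, w⟫ with hq1def
  set q2 : ℝ := ‖w‖^2 with hq2def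
  have hq2 : 0 < q2 := by
    rw [hq2def]
    have := norm_pos_iff.mpr hwne
    positivity
  have hCS : q1^2 ≤ 4*(q0*q2) := by
    have h1 := real_inner_mul_inner_self_le (Bs - O) w
    rw [real_inner_self_eq_norm_sq, real_inner_self_eq_norm_sq] at h1
    calc q1^2 = 4*(⟪Bs - O, w⟫ * ⟪Bs - O, w⟫) := by rw [hq1def]; ring
    _ ≤ 4*(‖Bs - O‖^2 * ‖w‖^2) := by linarith
    _ = 4*(q0*q2) := by rw [hq0def, hq2def]
  -- the moving points
  set Bf : ℝ → EuclideanSpace ℝ (Fin n) := fun s => Bs + s • w with hBfdef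
  set bf : ℝ → ℝ := fun s => b0 + s * α with hbfdef
  set Af : ℝ → EuclideanSpace ℝ (Fin n) := fun s => O + (c / bf s) • (O - Bf s) with hAfdef
  have hbfval : ∀ s : ℝ, ⟪Bf s - O, v⟫ = bf s := by
    intro s
    rw [hBfdef, hbfdef]
    simp only
    rw [show Bs + s • w - O = (Bs - O) + s • w by abel, inner_add_left,
      real_inner_smul_left, ← hb0def, ← hαdef]
  have hbf0 : bf 0 = b0 := by rw [hbfdef]; simp
  have hbfc : Continuous bf := by
    rw [hbfdef]; exact continuous_const.add (continuous_id.mul continuous_const)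
  have hBfc : Continuous Bf := by
    rw [hBfdef]; exact continuous_const.add (continuous_id.smul continuous_const)
  have hbf0ne : bf 0 ≠ 0 := by rw [hbf0]; exact ne_of_lt hb0neg
  have hAfc : ContinuousAt Af 0 := by
    rw [hAfdef]
    apply ContinuousAt.add continuousAt_const
    apply ContinuousAt.smul (f := fun s => c / bf s) (g := fun s => O - Bf s)
    · exact ContinuousAt.div continuousAt_const hbfc.continuousAt hbf0ne
    · exact (continuous_const.sub hBfc).continuousAt
  have hAf0 : Af 0 = As := by
    rw [hAfdef]
    simp only [hbf0]
    rw [show Bf 0 = Bs by rw [hBfdef]; simp]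
    rw [hOeq, hc, hb0]
    have h1t : (1:ℝ) - t ≠ 0 := ne_of_gt ht'
    have ha0' : a0 ≠ 0 := ne_of_lt ha0
    match_scalars <;> field_simp <;> ring
  -- radius for V
  obtain ⟨rV, hrV, hballV⟩ := Metric.isOpen_iff.mp hVopen Bs hBsV
  set η : ℝ := rV / (2*(‖Bs - O‖ + 1)) with hηdef
  have hη : 0 < η := by rw [hηdef]; positivity
  have hηq : η * ‖Bs - O‖ < rV := by
    rw [hηdef]
    rw [div_mul_eq_mul_div, div_lt_iff₀ (by positivity)]
    nlinarith [norm_nonneg (Bs - O)]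
  -- points beyond Bs are outside C
  have hout : ∀ m : ℝ, 1 < m → O + m • (Bs - O) ∉ C := by
    intro m hm hmem
    apply hBsnotint
    have h2 := hconv.combo_interior_closure_mem_interior hO (subset_closure hmem)
      (by rw [sub_pos, div_lt_one (by linarith : (0:ℝ) < m)]; linarith : (0:ℝ) < 1 - 1/m)
      (by positivity : (0:ℝ) ≤ 1/m)
      (by field_simp; ring)
    have he : (1 - 1/m) • O + (1/m) • (O + m • (Bs - O)) = Bs := by
      have hm0 : m ≠ 0 := by positivity
      match_scalars <;> field_simp <;> ring
    rwa [he] at h2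
  -- eventual facts
  have hev1 : ∀ᶠ s in nhds (0:ℝ), |s| < δ₁ := by
    have := eventually_abs_sub_lt (0:ℝ) hδ₁
    simpa using this
  have hev2 : ∀ᶠ s in nhds (0:ℝ), bf s < 0 := by
    have hopen : IsOpen {s : ℝ | bf s < 0} := isOpen_lt hbfc continuous_const
    exact hopen.eventually_mem (by rw [Set.mem_setOf_eq, hbf0]; exact hb0neg)
  have hev3 : ∀ᶠ s in nhds (0:ℝ), Af s ∈ Metric.ball As ε := by
    apply hAfc.eventually_mem
    rw [hAf0]
    exact Metric.ball_mem_nhds As hε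
  have hev4 : ∀ᶠ s in nhds (0:ℝ), Af s ∈ U := by
    apply hAfc.eventually_mem
    rw [hAf0]
    exact hUopen.mem_nhds hAsU
  have hBf0 : Bf 0 = Bs := by rw [hBfdef]; simp
  have hev6 : ∀ᶠ s in nhds (0:ℝ), O + (1+η) • (Bf s - O) ∉ C := by
    have hcont : Continuous (fun s => O + (1+η) • (Bf s - O)) :=
      continuous_const.add (by have := hBfc; fun_prop)
    have hopen : IsOpen {s : ℝ | O + (1+η) • (Bf s - O) ∉ C} :=
      hC.isOpen_compl.preimage hcont
    apply hopen.eventually_mem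
    rw [Set.mem_setOf_eq, hBf0]
    exact hout (1+η) (by linarith)
  have hev7 : ∀ᶠ s in nhds (0:ℝ), (1+η)*(|s| * ‖w‖) + η*‖Bs - O‖ < rV := by
    have hcont : Continuous (fun s : ℝ => (1+η)*(|s| * ‖w‖) + η*‖Bs - O‖) := by
      apply Continuous.add _ continuous_const
      exact continuous_const.mul (continuous_abs.mul continuous_const)
    have hopen : IsOpen {s : ℝ | (1+η)*(|s| * ‖w‖) + η*‖Bs - O‖ < rV} :=
      isOpen_lt hcont continuous_const
    apply hopen.eventually_mem
    rw [Set.mem_setOf_eq]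
    simp only [abs_zero, zero_mul, mul_zero, zero_add]
    exact hηq
  -- the per-s inequality
  have hmain : ∀ᶠ s in nhds (0:ℝ),
      ((a0 + s*α)^2*(q0 + q1*s + q2*s^2))*b0^2 ≤ a0^2*q0*(b0 + s*α)^2 := by
    filter_upwards [hev1, hev2, hev3, hev4, hev6, hev7] with s h1 h2 h3 h4 h6 h7
    have hBpe : Bf s = Bs + s • w := by rw [hBfdef]
    have hbfe : bf s = b0 + s * α := by rw [hbfdef]
    have hAfe : Af s = O + (c / bf s) • (O - Bf s) := by rw [hAfdef]
    have hBpC : Bf s ∈ C := by rw [hBpe]; exact hBin s h1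
    have hbsne : bf s ≠ 0 := ne_of_lt h2
    have hBpO : ⟪Bf s - O, v⟫ = bf s := hbfval s
    have hBpne : Bf s - O ≠ 0 := by
      intro h; rw [h, inner_zero_left] at hBpO; exact hbsne hBpO.symm
    have hdpos : 0 < ‖Bf s - O‖ := norm_pos_iff.mpr hBpne
    -- exit scalar
    set S : Set ℝ := Set.Icc (1:ℝ) (1+η) ∩ ((fun r : ℝ => O + r • (Bf s - O)) ⁻¹' C)
      with hSdef
    have heB : O + (1:ℝ) • (Bf s - O) = Bf s := by rw [one_smul]; abel
    have h1S : (1:ℝ) ∈ S :=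
      ⟨⟨le_refl 1, by linarith⟩, by rw [Set.mem_preimage]; rw [heB]; exact hBpC⟩
    have hSclosed : IsClosed S :=
      IsClosed.inter isClosed_Icc
        (hC.preimage (continuous_const.add (continuous_id.smul continuous_const)))
    have hScomp : IsCompact S :=
      isCompact_Icc.of_isClosed_subset hSclosed Set.inter_subset_left
    set ρ := sSup S with hρdef
    have hρS : ρ ∈ S := hScomp.sSup_mem ⟨1, h1S⟩
    have hρ1 : 1 ≤ ρ := le_csSup hScomp.bddAbove h1S
    have hρη : ρ ≤ 1+η := hρS.1.2
    have hρC : O + ρ • (Bf s - O) ∈ C := hρS.2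
    have hρlt : ρ < 1+η := by
      rcases lt_or_eq_of_le hρη with h | h
      · exact h
      · exact absurd (h ▸ hρC) h6
    set Bex := O + ρ • (Bf s - O) with hBexdef
    have hBexnotint : Bex ∉ interior C := by
      intro hin
      obtain ⟨r, hr, hball⟩ := Metric.mem_nhds_iff.mp (mem_interior_iff_mem_nhds.mp hin)
      set r' := min (1+η) (ρ + r/(2*‖Bf s - O‖)) with hr'def
      have hρr' : ρ < r' := by
        apply lt_min hρlt
        have : 0 < r/(2*‖Bf s - O‖) := by positivity
        linarith
      have hr'S : r' ∈ S := by
        refine ⟨⟨by linarith, min_le_left _ _⟩, ?_⟩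
        rw [Set.mem_preimage]
        apply hball
        rw [Metric.mem_ball, dist_eq_norm]
        have he2 : O + r' • (Bf s - O) - Bex = (r' - ρ) • (Bf s - O) := by
          rw [hBexdef]; module
        rw [he2, norm_smul, Real.norm_eq_abs, abs_of_pos (by linarith)]
        have hr'le : r' ≤ ρ + r/(2*‖Bf s - O‖) := min_le_right _ _
        calc (r' - ρ) * ‖Bf s - O‖ ≤ (r/(2*‖Bf s - O‖)) * ‖Bf s - O‖ :=
          mul_le_mul_of_nonneg_right (by linarith) (norm_nonneg _)
        _ = r/2 := by field_simp
        _ < r := by linarith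
      have := le_csSup hScomp.bddAbove hr'S
      linarith
    have hBexfr : Bex ∈ frontier C := ⟨subset_closure hρC, hBexnotint⟩
    have hBexV : Bex ∈ V := by
      apply hballV
      rw [Metric.mem_ball, dist_eq_norm]
      have he3 : Bex - Bs = (ρ-1) • (Bs - O) + (ρ*s) • w := by
        rw [hBexdef, hBpe]; module
      rw [he3]
      calc ‖(ρ-1) • (Bs - O) + (ρ*s) • w‖
          ≤ ‖(ρ-1) • (Bs - O)‖ + ‖(ρ*s) • w‖ := norm_add_le _ _
      _ = (ρ-1)*‖Bs - O‖ + (ρ*|s|)*‖w‖ := by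
          rw [norm_smul, norm_smul, Real.norm_eq_abs, Real.norm_eq_abs,
            abs_of_nonneg (by linarith : (0:ℝ) ≤ ρ - 1), abs_mul,
            abs_of_nonneg (by linarith : (0:ℝ) ≤ ρ)]
      _ = (ρ-1)*‖Bs - O‖ + ρ*(|s| * ‖w‖) := by ring
      _ ≤ η*‖Bs - O‖ + (1+η)*(|s| * ‖w‖) :=
          add_le_add
            (mul_le_mul_of_nonneg_right (by linarith) (norm_nonneg _))
            (mul_le_mul_of_nonneg_right hρη (by positivity))
      _ < rV := by linarith [h7]
    -- the A point
    have hinner0 : ⟪Af s - As, v⟫ = 0 := by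
      rw [show Af s - As = (O - As) + (c / bf s) • (O - Bf s) by rw [hAfe]; abel,
        inner_add_left, real_inner_smul_left,
        show (⟪O - Bf s, v⟫:ℝ) = -(bf s) by
          rw [show O - Bf s = -(Bf s - O) by abel, inner_neg_left, hBpO],
        ← hcdef]
      field_simp; ring
    have hApC : Af s ∈ C := hεsub ⟨h3, hinner0⟩
    have hApfr : Af s ∈ frontier C :=
      ⟨subset_closure hApC, fun hin => (ne_of_lt (hIntLt _ hin)) hinner0⟩
    -- O lies on the segment [Af s, Bex]
    set κ := c / bf s with hκdef
    have hκpos : 0 < κ := div_pos_of_neg_of_neg hcneg h2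
    have hρκ : (0:ℝ) < ρ + κ := by linarith
    have hOseg2 : O ∈ segment ℝ (Af s) Bex := by
      refine ⟨ρ/(ρ+κ), κ/(ρ+κ), by positivity, by positivity, by field_simp, ?_⟩
      rw [hAfe, hBexdef]
      have hρκ' : ρ + κ ≠ 0 := ne_of_gt hρκ
      match_scalars <;> field_simp <;> ring
    have hdistle := hmax (Af s) ⟨hApfr, h4⟩ Bex ⟨hBexfr, hBexV⟩ hOseg2
    -- chain of distances
    have hABex : dist (Af s) Bex = (κ + ρ) * ‖Bf s - O‖ := by
      rw [dist_eq_norm,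
        show Af s - Bex = -((κ + ρ) • (Bf s - O)) by rw [hAfe, hBexdef]; module,
        norm_neg, norm_smul, Real.norm_eq_abs, abs_of_pos (by linarith)]
    have hAO : dist (Af s) O = κ * ‖Bf s - O‖ := by
      rw [dist_eq_norm,
        show Af s - O = -(κ • (Bf s - O)) by rw [hAfe]; module,
        norm_neg, norm_smul, Real.norm_eq_abs, abs_of_pos hκpos]
    have hOBp : dist O (Bf s) = ‖Bf s - O‖ := by rw [dist_eq_norm, norm_sub_rev]
    have hchain : dist (Af s) (Bf s) ≤ dist As Bs := by
      calc dist (Af s) (Bf s) ≤ dist (Af s) O + dist O (Bf s) := dist_triangle _ _ _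
      _ ≤ dist (Af s) Bex := by
          rw [hABex, hAO, hOBp]
          have h1d : 1*‖Bf s - O‖ ≤ ρ*‖Bf s - O‖ :=
            mul_le_mul_of_nonneg_right hρ1 (norm_nonneg _)
          linarith
      _ ≤ dist As Bs := hdistle
    -- convert to scalar inequality
    have hApBp : dist (Af s) (Bf s) = |(a0 + s*α)/(bf s)| * ‖(Bs - O) + s • w‖ := by
      have e0 : a0 + s*α = bf s + c := by rw [hbfe, ha0b0c]; ring
      have e1 : (a0 + s*α)/(bf s) = 1 + κ := by
        rw [e0, hκdef, add_div, div_self hbsne]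
      rw [dist_eq_norm,
        show Af s - Bf s = ((a0 + s*α)/(bf s)) • (O - Bf s) by
          rw [e1, hAfe]; module,
        norm_smul, Real.norm_eq_abs,
        show ‖O - Bf s‖ = ‖(Bs - O) + s • w‖ by
          rw [norm_sub_rev, hBpe, show Bs + s • w - O = (Bs - O) + s • w by abel]]
    have hN2 : ‖(Bs - O) + s • w‖^2 = q0 + q1*s + q2*s^2 := by
      rw [norm_add_sq_real, real_inner_smul_right, norm_smul, Real.norm_eq_abs,
        mul_pow, sq_abs, hq1def, hq0def, hq2def]
      ring
    have hD2 : (dist As Bs)^2 * b0^2 = a0^2 * q0 := by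
      have hqe : ‖Bs - O‖ = (1-t) * dist As Bs := by
        rw [hBsO, norm_smul, Real.norm_eq_abs, abs_of_pos ht', dist_eq_norm, norm_sub_rev]
      rw [hb0, hq0def, hqe]; ring
    have hsq : (dist (Af s) (Bf s))^2 ≤ (dist As Bs)^2 :=
      pow_le_pow_left₀ dist_nonneg hchain 2
    rw [hApBp, mul_pow, sq_abs, div_pow, hN2] at hsq
    have hbf2 : 0 < (bf s)^2 := by positivity
    have hb02 : 0 < b0^2 := by
      have : b0 ≠ 0 := ne_of_lt hb0neg
      positivity
    have hfin := mul_le_mul_of_nonneg_right hsq (le_of_lt (mul_pos hbf2 hb02))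
    have hlhs : (a0+s*α)^2/(bf s)^2 * (q0+q1*s+q2*s^2) * ((bf s)^2*b0^2)
        = ((a0+s*α)^2*(q0+q1*s+q2*s^2))*b0^2 := by
      field_simp
    have hrhs : (dist As Bs)^2 * ((bf s)^2*b0^2) = a0^2*q0*(bf s)^2 := by
      calc (dist As Bs)^2 * ((bf s)^2*b0^2) = ((dist As Bs)^2*b0^2)*(bf s)^2 := by ring
      _ = a0^2*q0*(bf s)^2 := by rw [hD2]
    rw [hlhs, hrhs, hbfe] at hfin
    exact hfin
  -- extract δ and conclude
  rw [Metric.eventually_nhds_iff] at hmain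
  obtain ⟨δ, hδpos, hδball⟩ := hmain
  have hpoly : ∀ s : ℝ, |s| < δ →
      (b0^2*(a0^2*q1 + 2*a0*α*q0) - 2*a0^2*q0*b0*α)*s
      + (b0^2*(a0^2*q2 + 2*a0*α*q1 + α^2*q0) - a0^2*q0*α^2)*s^2
      + (b0^2*(2*a0*α*q2 + α^2*q1))*s^3
      + (b0^2*(α^2*q2))*s^4 ≤ 0 := by
    intro s hs
    have h := hδball (by rw [Real.dist_eq, sub_zero]; exact hs)
    have e : (b0^2*(a0^2*q1 + 2*a0*α*q0) - 2*a0^2*q0*b0*α)*s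
      + (b0^2*(a0^2*q2 + 2*a0*α*q1 + α^2*q0) - a0^2*q0*α^2)*s^2
      + (b0^2*(2*a0*α*q2 + α^2*q1))*s^3
      + (b0^2*(α^2*q2))*s^4
      = ((a0 + s*α)^2*(q0 + q1*s + q2*s^2))*b0^2 - a0^2*q0*(b0 + s*α)^2 := by ring
    linarith
  obtain ⟨hg1, hg2⟩ := aux_poly _ _ _ _ δ hδpos hpoly
  rw [hb0] at hg1 hg2
  exact aux_contra t a0 α q0 q1 q2 ht0 ht1 ha0 hq0 hq2 hCS (by linarith) (by linarith)
end
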